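/- arXiv:1306.5339 — 8 statements merged into one kernel-verified Lean document; each statement's English description precedes it below -/
import Mathlib

section
/- For every real number t with 0 < t < 1, if Q(t) := (−1 + 22t² + 16t³ − 33t⁴ + 16t⁶ + √(1 + 20t² − 26t⁴ + 20t⁶ + t⁸)) / (16t²(1 − t²)), then P(t, Q(t)) = 0, where P(t, q) = 8t¹⁰ + (16q − 33)t⁸ + 16t⁷ + (8q² − 49q + 56)t⁶ + (16q − 33)t⁵ − (16q² − 55q + 39)t⁴ − (16q − 22)t³ + (8q² − 23q + 18)t² − t + q − 2. -/
theorem gion_Q_satisfies_P (t : ℝ) (ht0 : 0 < t) (ht1 : t < 1) (q : ℝ)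
    (hq : q = (-1 + 22 * t ^ 2 + 16 * t ^ 3 - 33 * t ^ 4 + 16 * t ^ 6 +
        Real.sqrt (1 + 20 * t ^ 2 - 26 * t ^ 4 + 20 * t ^ 6 + t ^ 8)) /
        (16 * t ^ 2 * (1 - t ^ 2))) :
    8 * t ^ 10 + (16 * q - 33) * t ^ 8 + 16 * t ^ 7 +
      (8 * q ^ 2 - 49 * q + 56) * t ^ 6 + (16 * q - 33) * t ^ 5 -
      (16 * q ^ 2 - 55 * q + 39) * t ^ 4 - (16 * q - 22) * t ^ 3 +
      (8 * q ^ 2 - 23 * q + 18) * t ^ 2 - t + q - 2 = 0 := by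
  set s := Real.sqrt (1 + 20 * t ^ 2 - 26 * t ^ 4 + 20 * t ^ 6 + t ^ 8) with hs_def
  have hrad : (0:ℝ) ≤ 1 + 20 * t ^ 2 - 26 * t ^ 4 + 20 * t ^ 6 + t ^ 8 := by nlinarith [sq_nonneg (1 - t^2), sq_nonneg (t^2), sq_nonneg (t^3), sq_nonneg (t^4)]
  have hs : s ^ 2 = 1 + 20 * t ^ 2 - 26 * t ^ 4 + 20 * t ^ 6 + t ^ 8 :=
    Real.sq_sqrt hrad
  have hD : (16 * t ^ 2 * (1 - t ^ 2) : ℝ) ≠ 0 := by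
    have h1 : (0:ℝ) < t ^ 2 := by positivity
    have h2 : (0:ℝ) < 1 - t ^ 2 := by nlinarith
    positivity
  rw [eq_div_iff hD] at hq
  have h32 : (32 * t ^ 2 : ℝ) ≠ 0 := by positivity
  have key : (32 * t ^ 2) * (8 * t ^ 10 + (16 * q - 33) * t ^ 8 + 16 * t ^ 7 +
      (8 * q ^ 2 - 49 * q + 56) * t ^ 6 + (16 * q - 33) * t ^ 5 -
      (16 * q ^ 2 - 55 * q + 39) * t ^ 4 - (16 * q - 22) * t ^ 3 +
      (8 * q ^ 2 - 23 * q + 18) * t ^ 2 - t + q - 2) = 0 := by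
    linear_combination (16 * t ^ 2 * (1 - t ^ 2) * q -
      (-1 + 22 * t ^ 2 + 16 * t ^ 3 - 33 * t ^ 4 + 16 * t ^ 6) + s) * hq + hs
  exact (mul_eq_zero.mp key).resolve_left h32
end

section
/- The function Q(t) := (−1 + 22t² + 16t³ − 33t⁴ + 16t⁶ + √(1 + 20t² − 26t⁴ + 20t⁶ + t⁸)) / (16t²(1 − t²)) is strictly increasing on the interval (0, t₀], where t₀ := (1 − √5 + √(2(5 − √5)))/2. -/
set_option maxHeartbeats 2000000 in
theorem gion_Q_strictMonoOn :
    StrictMonoOn (fun t : ℝ =>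
      (-1 + 22 * t ^ 2 + 16 * t ^ 3 - 33 * t ^ 4 + 16 * t ^ 6 +
        Real.sqrt (1 + 20 * t ^ 2 - 26 * t ^ 4 + 20 * t ^ 6 + t ^ 8)) /
        (16 * t ^ 2 * (1 - t ^ 2)))
      (Set.Ioc 0 ((1 - Real.sqrt 5 + Real.sqrt (2 * (5 - Real.sqrt 5))) / 2)) := by
  set t₀ : ℝ := (1 - Real.sqrt 5 + Real.sqrt (2 * (5 - Real.sqrt 5))) / 2 with ht₀def
  have hs5 : Real.sqrt 5 ^ 2 = 5 := Real.sq_sqrt (by norm_num)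
  have hs5pos : (0:ℝ) < Real.sqrt 5 := Real.sqrt_pos.mpr (by norm_num)
  have hs5lt : Real.sqrt 5 < 3 := by nlinarith
  have hs5gt : (2:ℝ) < Real.sqrt 5 := by nlinarith
  have ht₀1 : t₀ < 1 := by
    have h1 : Real.sqrt (2 * (5 - Real.sqrt 5)) < 1 + Real.sqrt 5 := by
      rw [show (1:ℝ) + Real.sqrt 5 = Real.sqrt ((1 + Real.sqrt 5)^2) from
        (Real.sqrt_sq (by positivity)).symm]
      exact Real.sqrt_lt_sqrt (by nlinarith) (by nlinarith)
    rw [ht₀def]; linarith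
  -- derivative of f at any x ∈ (0,1)
  have key : ∀ x : ℝ, 0 < x → x < 1 →
      HasDerivAt (fun t : ℝ =>
        (-1 + 22 * t ^ 2 + 16 * t ^ 3 - 33 * t ^ 4 + 16 * t ^ 6 +
          Real.sqrt (1 + 20 * t ^ 2 - 26 * t ^ 4 + 20 * t ^ 6 + t ^ 8)) /
          (16 * t ^ 2 * (1 - t ^ 2)))
        ((((44*x + 48*x^2 - 132*x^3 + 96*x^5) +
            (40*x - 104*x^3 + 120*x^5 + 8*x^7) /
              (2 * Real.sqrt (1 + 20 * x ^ 2 - 26 * x ^ 4 + 20 * x ^ 6 + x ^ 8))) *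
            (16 * x ^ 2 * (1 - x ^ 2)) -
          (-1 + 22 * x ^ 2 + 16 * x ^ 3 - 33 * x ^ 4 + 16 * x ^ 6 +
            Real.sqrt (1 + 20 * x ^ 2 - 26 * x ^ 4 + 20 * x ^ 6 + x ^ 8)) *
            (32*x - 64*x^3)) / (16 * x ^ 2 * (1 - x ^ 2)) ^ 2) x := by
    intro x hx hx1
    have hR : (0:ℝ) < 1 + 20 * x ^ 2 - 26 * x ^ 4 + 20 * x ^ 6 + x ^ 8 := by
      nlinarith [sq_nonneg (20*x^2 - 13), pow_pos hx 2, pow_pos hx 8]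
    have hDpos : (0:ℝ) < 16 * x ^ 2 * (1 - x ^ 2) := by
      have h1 : (0:ℝ) < 1 - x ^ 2 := by nlinarith [mul_pos (by linarith : (0:ℝ) < 1 - x) (by linarith : (0:ℝ) < 1 + x)]
      have h2 : (0:ℝ) < x ^ 2 := pow_pos hx 2
      positivity
    have hP : HasDerivAt (fun t : ℝ => -1 + 22 * t ^ 2 + 16 * t ^ 3 - 33 * t ^ 4 + 16 * t ^ 6)
        (44*x + 48*x^2 - 132*x^3 + 96*x^5) x := by
      have h := (((((hasDerivAt_pow 2 x).const_mul (22:ℝ)).const_add (-1)).add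
          ((hasDerivAt_pow 3 x).const_mul (16:ℝ))).sub
          ((hasDerivAt_pow 4 x).const_mul (33:ℝ))).add ((hasDerivAt_pow 6 x).const_mul (16:ℝ))
      exact h.congr_deriv (by push_cast; ring)
    have hRd : HasDerivAt (fun t : ℝ => 1 + 20 * t ^ 2 - 26 * t ^ 4 + 20 * t ^ 6 + t ^ 8)
        (40*x - 104*x^3 + 120*x^5 + 8*x^7) x := by
      have h := (((((hasDerivAt_pow 2 x).const_mul (20:ℝ)).const_add 1).sub
          ((hasDerivAt_pow 4 x).const_mul (26:ℝ))).add
          ((hasDerivAt_pow 6 x).const_mul (20:ℝ))).add (hasDerivAt_pow 8 x)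
      exact h.congr_deriv (by push_cast; ring)
    have hsq : HasDerivAt (fun t : ℝ => Real.sqrt (1 + 20 * t ^ 2 - 26 * t ^ 4 + 20 * t ^ 6 + t ^ 8))
        ((40*x - 104*x^3 + 120*x^5 + 8*x^7) /
          (2 * Real.sqrt (1 + 20 * x ^ 2 - 26 * x ^ 4 + 20 * x ^ 6 + x ^ 8))) x :=
      hRd.sqrt hR.ne'
    have hD : HasDerivAt (fun t : ℝ => 16 * t ^ 2 * (1 - t ^ 2)) (32*x - 64*x^3) x := by
      have h := ((hasDerivAt_pow 2 x).const_mul (16:ℝ)).mul ((hasDerivAt_pow 2 x).const_sub 1)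
      exact h.congr_deriv (by push_cast; ring)
    exact (hP.add hsq).div hD hDpos.ne'
  refine strictMonoOn_of_deriv_pos (convex_Ioc _ _) ?_ ?_
  · intro x hx
    exact (key x hx.1 (lt_of_le_of_lt hx.2 ht₀1)).continuousAt.continuousWithinAt
  · rw [interior_Ioc]
    rintro x ⟨hx0, hxt⟩
    have hx1 : x < 1 := hxt.trans ht₀1
    rw [(key x hx0 hx1).deriv]
    have hy : (0:ℝ) < 1 - x := by linarith
    have hR : (0:ℝ) < 1 + 20 * x ^ 2 - 26 * x ^ 4 + 20 * x ^ 6 + x ^ 8 := by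
      nlinarith [sq_nonneg (20*x^2 - 13), pow_pos hx0 2, pow_pos hx0 8]
    have hDpos : (0:ℝ) < 16 * x ^ 2 * (1 - x ^ 2) := by
      have h1 : (0:ℝ) < 1 - x ^ 2 := by nlinarith [mul_pos (by linarith : (0:ℝ) < 1 - x) (by linarith : (0:ℝ) < 1 + x)]
      have h2 : (0:ℝ) < x ^ 2 := pow_pos hx0 2
      positivity
    set s : ℝ := Real.sqrt (1 + 20 * x ^ 2 - 26 * x ^ 4 + 20 * x ^ 6 + x ^ 8) with hsdef
    have hs : 0 < s := Real.sqrt_pos.mpr hR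
    have hs2 : s ^ 2 = 1 + 20 * x ^ 2 - 26 * x ^ 4 + 20 * x ^ 6 + x ^ 8 := Real.sq_sqrt hR.le
    apply div_pos _ (pow_pos hDpos 2)
    -- U > 0
    have hU : 0 < 32*x - 64*x^3 + 256*x^4 - 352*x^5 + 256*x^6 + 1024*x^7 - 512*x^9 := by
      have hid : 32*x - 64*x^3 + 256*x^4 - 352*x^5 + 256*x^6 + 1024*x^7 - 512*x^9 =
          x*(32*(1-x)^8 + 256*x*(1-x)^7 + 832*x^2*(1-x)^6 + 1664*x^3*(1-x)^5 +
             2208*x^4*(1-x)^4 + 1920*x^5*(1-x)^3 + 2176*x^6*(1-x)^2 + 2560*x^7*(1-x) +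
             640*x^8) := by ring
      rw [hid]; positivity
    -- 4 R U² − V² > 0
    have hW : 0 < 4*(1 + 20*x^2 - 26*x^4 + 20*x^6 + x^8) *
          (32*x - 64*x^3 + 256*x^4 - 352*x^5 + 256*x^6 + 1024*x^7 - 512*x^9)^2 -
          (-64*x - 512*x^3 + 1920*x^5 - 1024*x^7 + 704*x^9)^2 := by
      have hid : 4*(1 + 20*x^2 - 26*x^4 + 20*x^6 + x^8) *
          (32*x - 64*x^3 + 256*x^4 - 352*x^5 + 256*x^6 + 1024*x^7 - 512*x^9)^2 -
          (-64*x - 512*x^3 + 1920*x^5 - 1024*x^7 + 704*x^9)^2 =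
          x^5*(65536*(1-x)^21 + 851968*x*(1-x)^20 + 4521984*x^2*(1-x)^19 +
            12779520*x^3*(1-x)^18 + 31916032*x^4*(1-x)^17 + 186318848*x^5*(1-x)^16 +
            1181417472*x^6*(1-x)^15 + 5130223616*x^7*(1-x)^14 + 15715270656*x^8*(1-x)^13 +
            35903766528*x^9*(1-x)^12 + 63531384832*x^10*(1-x)^11 + 89282838528*x^11*(1-x)^10 +
            101754863616*x^12*(1-x)^9 + 96559693824*x^13*(1-x)^8 + 78870740992*x^14*(1-x)^7 +
            56370397184*x^15*(1-x)^6 + 34196160512*x^16*(1-x)^5 + 16571695104*x^17*(1-x)^4 +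
            6136266752*x^18*(1-x)^3 + 1681915904*x^19*(1-x)^2 + 301989888*x^20*(1-x) +
            25165824*x^21) := by ring
      rw [hid]; positivity
    -- numerator positivity
    have hsne : s ≠ 0 := hs.ne'
    have expand : (2*s) * (((44*x + 48*x^2 - 132*x^3 + 96*x^5) +
          (40*x - 104*x^3 + 120*x^5 + 8*x^7) / (2*s)) * (16 * x ^ 2 * (1 - x ^ 2)) -
        (-1 + 22 * x ^ 2 + 16 * x ^ 3 - 33 * x ^ 4 + 16 * x ^ 6 + s) * (32*x - 64*x^3)) =
        (2*s) * (32*x - 64*x^3 + 256*x^4 - 352*x^5 + 256*x^6 + 1024*x^7 - 512*x^9) +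
        (-64*x - 512*x^3 + 1920*x^5 - 1024*x^7 + 704*x^9) +
        2*(s^2 - (1 + 20*x^2 - 26*x^4 + 20*x^6 + x^8))*(-(32*x - 64*x^3)) := by
      field_simp
      ring
    have h2sN : 0 < (2*s) * (((44*x + 48*x^2 - 132*x^3 + 96*x^5) +
          (40*x - 104*x^3 + 120*x^5 + 8*x^7) / (2*s)) * (16 * x ^ 2 * (1 - x ^ 2)) -
        (-1 + 22 * x ^ 2 + 16 * x ^ 3 - 33 * x ^ 4 + 16 * x ^ 6 + s) * (32*x - 64*x^3)) := by
      rw [expand, hs2]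
      nlinarith [mul_pos hs hU, hW, sq_nonneg (2*s*(32*x - 64*x^3 + 256*x^4 - 352*x^5 +
        256*x^6 + 1024*x^7 - 512*x^9) + (-64*x - 512*x^3 + 1920*x^5 - 1024*x^7 + 704*x^9)), hs2]
    nlinarith [h2sN, hs]
end

section
/- With t₀ := (1 − √5 + √(2(5 − √5)))/2 and Q(t) := (−1 + 22t² + 16t³ − 33t⁴ + 16t⁶ + √(1 + 20t² − 26t⁴ + 20t⁶ + t⁸)) / (16t²(1 − t²)), one has Q(t₀) = −3 + (3√5)/2 + (1/2)·√((125 − 41√5)/2). -/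
theorem gion_Q_at_t0 (t₀ : ℝ)
    (ht₀ : t₀ = (1 - Real.sqrt 5 + Real.sqrt (2 * (5 - Real.sqrt 5))) / 2) :
    (-1 + 22 * t₀ ^ 2 + 16 * t₀ ^ 3 - 33 * t₀ ^ 4 + 16 * t₀ ^ 6 +
        Real.sqrt (1 + 20 * t₀ ^ 2 - 26 * t₀ ^ 4 + 20 * t₀ ^ 6 + t₀ ^ 8)) /
        (16 * t₀ ^ 2 * (1 - t₀ ^ 2)) =
      -3 + 3 * Real.sqrt 5 / 2 + (1 / 2) * Real.sqrt ((125 - 41 * Real.sqrt 5) / 2) := by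
  set s := Real.sqrt 5 with hsdef
  have hs0 : 0 ≤ s := Real.sqrt_nonneg 5
  have hs : s ^ 2 = 5 := Real.sq_sqrt (by norm_num)
  have hs2 : 2 ≤ s := by nlinarith
  have hs3 : s ≤ 3 := by nlinarith
  set r := Real.sqrt (2 * (5 - s)) with hrdef
  have hr0 : 0 ≤ r := Real.sqrt_nonneg _
  have hr : r ^ 2 = 10 - 2 * s := by
    have := Real.sq_sqrt (show (0:ℝ) ≤ 2 * (5 - s) by nlinarith)
    rw [← hrdef] at this; linarith
  subst ht₀
  -- positivity of t₀ and 1 - t₀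
  have htpos : 0 < (1 - s + r) / 2 := by nlinarith [sq_nonneg (r - (s - 1))]
  have htlt1 : (1 - s + r) / 2 < 1 := by nlinarith [sq_nonneg (r - (s + 1))]
  have hD : (0:ℝ) < 16 * ((1 - s + r) / 2) ^ 2 * (1 - ((1 - s + r) / 2) ^ 2) := by
    nlinarith [sq_nonneg ((1 - s + r) / 2), mul_pos htpos htpos,
      mul_pos (mul_pos htpos htpos) (show (0:ℝ) < 1 - (1 - s + r)/2 by linarith)]
  -- the inner square root
  have hfac : (5*s - 9 - r*(3 - s)) * (5*s - 9 + r*(3 - s)) = 6 - 2*s := by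
    linear_combination ((3 : ℝ) + (2 : ℝ)*s) * hs + ((-9 : ℝ) + (6 : ℝ)*s + (-1 : ℝ)*s^2) * hr
  have hpos2 : 0 < 5*s - 9 + r*(3 - s) := by nlinarith [mul_nonneg hr0 (show (0:ℝ) ≤ 3 - s by linarith)]
  have hXnn : 0 ≤ -54 + 30*s - 18*r + 6*(s*r) := by nlinarith [hfac, hpos2]
  have hU : Real.sqrt (1 + 20 * ((1 - s + r) / 2) ^ 2 - 26 * ((1 - s + r) / 2) ^ 4 +
      20 * ((1 - s + r) / 2) ^ 6 + ((1 - s + r) / 2) ^ 8) = -54 + 30*s - 18*r + 6*(s*r) := by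
    rw [show 1 + 20 * ((1 - s + r) / 2) ^ 2 - 26 * ((1 - s + r) / 2) ^ 4 +
        20 * ((1 - s + r) / 2) ^ 6 + ((1 - s + r) / 2) ^ 8
        = (-54 + 30*s - 18*r + 6*(s*r)) ^ 2 by
      linear_combination ((274243/256 : ℝ) + (10869/32 : ℝ)*r + (-872 : ℝ)*s + (-7729/32 : ℝ)*s*r + (61323/256 : ℝ)*s^2 + (851/16 : ℝ)*s^2*r + (-155/4 : ℝ)*s^3 + (-127/16 : ℝ)*s^3*r + (1009/256 : ℝ)*s^4 + (21/32 : ℝ)*s^4*r + (-1/4 : ℝ)*s^5 + (-1/32 : ℝ)*s^5*r + (1/256 : ℝ)*s^6) * hs + ((-489/2 : ℝ) + (769/32 : ℝ)*r + (1017/128 : ℝ)*r^2 + (77/32 : ℝ)*r^3 + (59/128 : ℝ)*r^4 + (1/32 : ℝ)*r^5 + (1/256 : ℝ)*r^6 + (4073/64 : ℝ)*s + (-1511/32 : ℝ)*s*r + (-437/32 : ℝ)*s*r^2 + (-93/32 : ℝ)*s*r^3 + (-29/128 : ℝ)*s*r^4 + (-1/32 : ℝ)*s*r^5 + (5765/64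 : ℝ)*s^2 + (543/16 : ℝ)*s^2*r + (63/8 : ℝ)*s^2*r^2 + (23/32 : ℝ)*s^2*r^3 + (7/64 : ℝ)*s^2*r^4 + (-797/16 : ℝ)*s^3 + (-193/16 : ℝ)*s^3*r + (-21/16 : ℝ)*s^3*r^2 + (-7/32 : ℝ)*s^3*r^3 + (187/16 : ℝ)*s^4 + (49/32 : ℝ)*s^4*r + (35/128 : ℝ)*s^4*r^2 + (-77/64 : ℝ)*s^5 + (-7/32 : ℝ)*s^5*r + (7/64 : ℝ)*s^6) * hr]
    exact Real.sqrt_sq hXnn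
  -- the right-hand-side square root
  have hW : Real.sqrt ((125 - 41 * s) / 2) = s*r - r/2 := by
    rw [show (125 - 41 * s) / 2 = (s*r - r/2) ^ 2 by
      linear_combination ((-12 : ℝ) + (2 : ℝ)*s) * hs + ((-1/4 : ℝ) + (1 : ℝ)*s + (-1 : ℝ)*s^2) * hr]
    exact Real.sqrt_sq (by nlinarith [mul_nonneg hr0 (show (0:ℝ) ≤ s - 1/2 by linarith)])
  rw [hU, hW, div_eq_iff hD.ne']
  linear_combination ((137/16 : ℝ) + (3/2 : ℝ)*r + (-27/2 : ℝ)*s + (-27/4 : ℝ)*s*r + (263/16 : ℝ)*s^2 + (13/4 : ℝ)*s^2*r + (-7/2 : ℝ)*s^3 + (-1 : ℝ)*s^3*r + (1/4 : ℝ)*s^4) * hs + ((-1/4 : ℝ) + (-5/4 : ℝ)*r + (3/16 : ℝ)*r^2 + (5/4 : ℝ)*r^3 + (1/4 : ℝ)*r^4 + (51/8 : ℝ)*s + (11/4 : ℝ)*s*r + (-7/2 : ℝ)*s*r^2 + (-1 : ℝ)*s*r^3 + (-51/8 : ℝ)*s^2 + (7/2 : ℝ)*s^2*r + (7/4 : ℝ)*s^2*r^2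 + (-5/2 : ℝ)*s^3 + (-2 : ℝ)*s^3*r + (7/4 : ℝ)*s^4) * hr
end

section
/- The function Q(t) := (−1 + 22t² + 16t³ − 33t⁴ + 16t⁶ + √(1 + 20t² − 26t⁴ + 20t⁶ + t⁸)) / (16t²(1 − t²)) tends to 2 as t → 0⁺. -/
noncomputable def gionG (t : ℝ) : ℝ :=
  (4 + 2 * t - 36 * t ^ 2 - 44 * t ^ 3 + 78 * t ^ 4 + 66 * t ^ 5 - 112 * t ^ 6
      - 32 * t ^ 7 + 66 * t ^ 8 - 16 * t ^ 10) /
    ((1 - t ^ 2) *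
      (Real.sqrt (1 + 20 * t ^ 2 - 26 * t ^ 4 + 20 * t ^ 6 + t ^ 8)
        - (-1 + 22 * t ^ 2 + 16 * t ^ 3 - 33 * t ^ 4 + 16 * t ^ 6)))

theorem gion_Q_limit :
    Filter.Tendsto (fun t : ℝ =>
      (-1 + 22 * t ^ 2 + 16 * t ^ 3 - 33 * t ^ 4 + 16 * t ^ 6 +
        Real.sqrt (1 + 20 * t ^ 2 - 26 * t ^ 4 + 20 * t ^ 6 + t ^ 8)) /
        (16 * t ^ 2 * (1 - t ^ 2)))
      (nhdsWithin 0 (Set.Ioi 0)) (nhds 2) := by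
  have hmem : Set.Ioo (0:ℝ) (1/6) ∈ nhdsWithin (0:ℝ) (Set.Ioi 0) := by
    apply Ioo_mem_nhdsGT_of_mem
    constructor <;> norm_num
  have heq : gionG =ᶠ[nhdsWithin (0:ℝ) (Set.Ioi 0)]
      (fun t : ℝ =>
      (-1 + 22 * t ^ 2 + 16 * t ^ 3 - 33 * t ^ 4 + 16 * t ^ 6 +
        Real.sqrt (1 + 20 * t ^ 2 - 26 * t ^ 4 + 20 * t ^ 6 + t ^ 8)) /
        (16 * t ^ 2 * (1 - t ^ 2))) := by
    apply Filter.eventuallyEq_of_mem hmem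
    intro t ht
    obtain ⟨ht0, ht6⟩ := ht
    have p2 : t ^ 2 < 1/36 := by nlinarith
    have p3 : t ^ 3 < 1/216 := by nlinarith
    have p4 : t ^ 4 < 1/1296 := by nlinarith
    have p6 : t ^ 6 < 1/46656 := by nlinarith [pow_pos ht0 3]
    have hB : (0:ℝ) ≤ 1 + 20 * t ^ 2 - 26 * t ^ 4 + 20 * t ^ 6 + t ^ 8 := by
      nlinarith [pow_pos ht0 2, pow_pos ht0 6, pow_pos ht0 8]
    set s := Real.sqrt (1 + 20 * t ^ 2 - 26 * t ^ 4 + 20 * t ^ 6 + t ^ 8) with hs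
    have hs2 : s ^ 2 = 1 + 20 * t ^ 2 - 26 * t ^ 4 + 20 * t ^ 6 + t ^ 8 :=
      Real.sq_sqrt hB
    have hsnn : 0 ≤ s := Real.sqrt_nonneg _
    have hA : -1 + 22 * t ^ 2 + 16 * t ^ 3 - 33 * t ^ 4 + 16 * t ^ 6 < 0 := by nlinarith [pow_pos ht0 4]
    have hden : s - (-1 + 22 * t ^ 2 + 16 * t ^ 3 - 33 * t ^ 4 + 16 * t ^ 6) > 0 := by
      linarith
    have h1t : (1:ℝ) - t ^ 2 > 0 := by nlinarith
    have ht0' : t ≠ 0 := ne_of_gt ht0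
    simp only [gionG]
    rw [div_eq_div_iff (by positivity) (by positivity)]
    linear_combination (t ^ 2 - 1) * hs2
  apply Filter.Tendsto.congr' heq
  have hg : Filter.Tendsto gionG (nhds 0) (nhds 2) := by
    have hc : ContinuousAt gionG 0 := by
      apply ContinuousAt.div
      · fun_prop
      · fun_prop
      · norm_num [Real.sqrt_one]
    have h0 : gionG 0 = 2 := by norm_num [gionG, Real.sqrt_one]
    simpa [h0] using hc.tendsto
  exact hg.mono_left nhdsWithin_le_nhds
end

section
/- The function Q(t) := (−1 + 22t² + 16t³ − 33t⁴ + 16t⁶ + √(1 + 20t² − 26t⁴ + 20t⁶ + t⁸)) / (16t²(1 − t²)) maps the interval (0, t₀] bijectively onto the interval (2, q₀], where t₀ := (1 − √5 + √(2(5 − √5)))/2 and q₀ := −3 + (3√5)/2 + (1/2)·√((125 − 41√5)/2). -/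
set_option maxHeartbeats 2000000

lemma cert_Winn {t : ℝ} (h0 : 0 < t) (h9 : 0 < 9 - 16*t) :
    0 < 1 - 2*t^2 + 8*t^3 - 11*t^4 + 8*t^5 + 32*t^6 - 16*t^8 := by
  have e0 : 0 < (1/43046721 : ℝ) * (9-16*t)^8 := by positivity
  have e1 : 0 ≤ (128/43046721 : ℝ) * (t^1 * (9-16*t)^7) := mul_nonneg (by norm_num) (mul_nonneg (pow_nonneg h0.le 1) (pow_nonneg h9.le 7))
  have e2 : 0 ≤ (7006/43046721 : ℝ) * (t^2 * (9-16*t)^6) := mul_nonneg (by norm_num) (mul_nonneg (pow_nonneg h0.le 2) (pow_nonneg h9.le 6))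
  have e3 : 0 ≤ (219656/43046721 : ℝ) * (t^3 * (9-16*t)^5) := mul_nonneg (by norm_num) (mul_nonneg (pow_nonneg h0.le 3) (pow_nonneg h9.le 5))
  have e4 : 0 ≤ (4359829/43046721 : ℝ) * (t^4 * (9-16*t)^4) := mul_nonneg (by norm_num) (mul_nonneg (pow_nonneg h0.le 4) (pow_nonneg h9.le 4))
  have e5 : 0 ≤ (56232584/43046721 : ℝ) * (t^5 * (9-16*t)^3) := mul_nonneg (by norm_num) (mul_nonneg (pow_nonneg h0.le 5) (pow_nonneg h9.le 3))
  have e6 : 0 ≤ (478214560/43046721 : ℝ) * (t^6 * (9-16*t)^2) := mul_nonneg (by norm_num) (mul_nonneg (pow_nonneg h0.le 6) (pow_nonneg h9.le 2))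
  have e7 : 0 ≤ (2763840512/43046721 : ℝ) * (t^7 * (9-16*t)^1) := mul_nonneg (by norm_num) (mul_nonneg (pow_nonneg h0.le 7) (pow_nonneg h9.le 1))
  have e8 : 0 ≤ (8562289648/43046721 : ℝ) * t^8 := mul_nonneg (by norm_num) (pow_nonneg h0.le 8)
  nlinarith [e0, e1, e2, e3, e4, e5, e6, e7, e8]

lemma cert_R {t : ℝ} (h0 : 0 < t) (h9 : 0 < 9 - 16*t) :
    0 < 1 - 8*t^1 + 19*t^2 + 24*t^3 - 59*t^4 + 174*t^5 - 193*t^6 - 156*t^7 + 755*t^8 - 622*t^9 - 503*t^10 + 2736*t^11 - 329*t^12 - 4222*t^13 + 757*t^14 + 3668*t^15 - 304*t^16 - 1610*t^17 - 16*t^18 + 256*t^19 + 16*t^21 := by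
  have e0 : 0 < (1/109418989131512359209 : ℝ) * (9-16*t)^21 := by positivity
  have e1 : 0 ≤ (88/36472996377170786403 : ℝ) * (t^1 * (9-16*t)^20) := mul_nonneg (by norm_num) (mul_nonneg (pow_nonneg h0.le 1) (pow_nonneg h9.le 20))
  have e2 : 0 ≤ (10753/36472996377170786403 : ℝ) * (t^2 * (9-16*t)^19) := mul_nonneg (by norm_num) (mul_nonneg (pow_nonneg h0.le 2) (pow_nonneg h9.le 19))
  have e3 : 0 ≤ (2430952/109418989131512359209 : ℝ) * (t^3 * (9-16*t)^18) := mul_nonneg (by norm_num) (mul_nonneg (pow_nonneg h0.le 3) (pow_nonneg h9.le 18))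
  have e4 : 0 ≤ (14228477/12157665459056928801 : ℝ) * (t^4 * (9-16*t)^17) := mul_nonneg (by norm_num) (mul_nonneg (pow_nonneg h0.le 4) (pow_nonneg h9.le 17))
  have e5 : 0 ≤ (574943294/12157665459056928801 : ℝ) * (t^5 * (9-16*t)^16) := mul_nonneg (by norm_num) (mul_nonneg (pow_nonneg h0.le 5) (pow_nonneg h9.le 16))
  have e6 : 0 ≤ (59449004485/36472996377170786403 : ℝ) * (t^6 * (9-16*t)^15) := mul_nonneg (by norm_num) (mul_nonneg (pow_nonneg h0.le 6) (pow_nonneg h9.le 15))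
  have e7 : 0 ≤ (653187610292/12157665459056928801 : ℝ) * (t^7 * (9-16*t)^14) := mul_nonneg (by norm_num) (mul_nonneg (pow_nonneg h0.le 7) (pow_nonneg h9.le 14))
  have e8 : 0 ≤ (21529285203035/12157665459056928801 : ℝ) * (t^8 * (9-16*t)^13) := mul_nonneg (by norm_num) (mul_nonneg (pow_nonneg h0.le 8) (pow_nonneg h9.le 13))
  have e9 : 0 ≤ (6021373893185042/109418989131512359209 : ℝ) * (t^9 * (9-16*t)^12) := mul_nonneg (by norm_num) (mul_nonneg (pow_nonneg h0.le 9) (pow_nonneg h9.le 12))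
  have e10 : 0 ≤ (54278664932619059/36472996377170786403 : ℝ) * (t^10 * (9-16*t)^11) := mul_nonneg (by norm_num) (mul_nonneg (pow_nonneg h0.le 10) (pow_nonneg h9.le 11))
  have e11 : 0 ≤ (1219425554041233440/36472996377170786403 : ℝ) * (t^11 * (9-16*t)^10) := mul_nonneg (by norm_num) (mul_nonneg (pow_nonneg h0.le 11) (pow_nonneg h9.le 10))
  have e12 : 0 ≤ (67013934657062388695/109418989131512359209 : ℝ) * (t^12 * (9-16*t)^9) := mul_nonneg (by norm_num) (mul_nonneg (pow_nonneg h0.le 12) (pow_nonneg h9.le 9))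
  have e13 : 0 ≤ (110436813809592213170/12157665459056928801 : ℝ) * (t^13 * (9-16*t)^8) := mul_nonneg (by norm_num) (mul_nonneg (pow_nonneg h0.le 13) (pow_nonneg h9.le 8))
  have e14 : 0 ≤ (1320039446477623933181/12157665459056928801 : ℝ) * (t^14 * (9-16*t)^7) := mul_nonneg (by norm_num) (mul_nonneg (pow_nonneg h0.le 14) (pow_nonneg h9.le 7))
  have e15 : 0 ≤ (37896961993472797303372/36472996377170786403 : ℝ) * (t^15 * (9-16*t)^6) := mul_nonneg (by norm_num) (mul_nonneg (pow_nonneg h0.le 15) (pow_nonneg h9.le 6))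
  have e16 : 0 ≤ (95713324413600668658896/12157665459056928801 : ℝ) * (t^16 * (9-16*t)^5) := mul_nonneg (by norm_num) (mul_nonneg (pow_nonneg h0.le 16) (pow_nonneg h9.le 5))
  have e17 : 0 ≤ (563587481721967048580534/12157665459056928801 : ℝ) * (t^17 * (9-16*t)^4) := mul_nonneg (by norm_num) (mul_nonneg (pow_nonneg h0.le 17) (pow_nonneg h9.le 4))
  have e18 : 0 ≤ (22492445726932073814641776/109418989131512359209 : ℝ) * (t^18 * (9-16*t)^3) := mul_nonneg (by norm_num) (mul_nonneg (pow_nonneg h0.le 18) (pow_nonneg h9.le 3))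
  have e19 : 0 ≤ (23682268072906101666115072/36472996377170786403 : ℝ) * (t^19 * (9-16*t)^2) := mul_nonneg (by norm_num) (mul_nonneg (pow_nonneg h0.le 19) (pow_nonneg h9.le 2))
  have e20 : 0 ≤ (47742572099297361622847488/36472996377170786403 : ℝ) * (t^20 * (9-16*t)^1) := mul_nonneg (by norm_num) (mul_nonneg (pow_nonneg h0.le 20) (pow_nonneg h9.le 1))
  have e21 : 0 ≤ (139127282703195310320030352/109418989131512359209 : ℝ) * t^21 := mul_nonneg (by norm_num) (pow_nonneg h0.le 21)
  nlinarith [e0, e1, e2, e3, e4, e5, e6, e7, e8, e9, e10, e11, e12, e13, e14, e15, e16, e17, e18, e19, e20, e21]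

lemma cert_M {t : ℝ} (h0 : 0 < t) (h9 : 0 < 9 - 16*t) :
    0 < 32 - 128*t^1 + 320*t^2 - 224*t^3 + 32*t^4 + 320*t^5 - 512*t^6 + 32*t^7 - 256*t^9 := by
  have e0 : 0 < (32/387420489 : ℝ) * (9-16*t)^9 := by positivity
  have e1 : 0 ≤ (128/14348907 : ℝ) * (t^1 * (9-16*t)^8) := mul_nonneg (by norm_num) (mul_nonneg (pow_nonneg h0.le 1) (pow_nonneg h9.le 8))
  have e2 : 0 ≤ (19264/43046721 : ℝ) * (t^2 * (9-16*t)^7) := mul_nonneg (by norm_num) (mul_nonneg (pow_nonneg h0.le 2) (pow_nonneg h9.le 7))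
  have e3 : 0 ≤ (1830752/129140163 : ℝ) * (t^3 * (9-16*t)^6) := mul_nonneg (by norm_num) (mul_nonneg (pow_nonneg h0.le 3) (pow_nonneg h9.le 6))
  have e4 : 0 ≤ (509792/1594323 : ℝ) * (t^4 * (9-16*t)^5) := mul_nonneg (by norm_num) (mul_nonneg (pow_nonneg h0.le 4) (pow_nonneg h9.le 5))
  have e5 : 0 ≤ (229729088/43046721 : ℝ) * (t^5 * (9-16*t)^4) := mul_nonneg (by norm_num) (mul_nonneg (pow_nonneg h0.le 5) (pow_nonneg h9.le 4))
  have e6 : 0 ≤ (8334391808/129140163 : ℝ) * (t^6 * (9-16*t)^3) := mul_nonneg (by norm_num) (mul_nonneg (pow_nonneg h0.le 6) (pow_nonneg h9.le 3))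
  have e7 : 0 ≤ (7519330144/14348907 : ℝ) * (t^7 * (9-16*t)^2) := mul_nonneg (by norm_num) (mul_nonneg (pow_nonneg h0.le 7) (pow_nonneg h9.le 2))
  have e8 : 0 ≤ (106005382144/43046721 : ℝ) * (t^8 * (9-16*t)^1) := mul_nonneg (by norm_num) (mul_nonneg (pow_nonneg h0.le 8) (pow_nonneg h9.le 1))
  have e9 : 0 ≤ (1753403479808/387420489 : ℝ) * t^9 := mul_nonneg (by norm_num) (pow_nonneg h0.le 9)
  nlinarith [e0, e1, e2, e3, e4, e5, e6, e7, e8, e9]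

lemma cert_Uh {t : ℝ} (h0 : 0 < t) (h9 : 0 < 9 - 16*t) :
    0 ≤ 1/2 + 10*t^2 - 16*t^3 + t^4 - 16*t^6 := by
  have e0 : 0 < (1/1062882 : ℝ) * (9-16*t)^6 := by positivity
  have e1 : 0 ≤ (16/177147 : ℝ) * (t^1 * (9-16*t)^5) := mul_nonneg (by norm_num) (mul_nonneg (pow_nonneg h0.le 1) (pow_nonneg h9.le 5))
  have e2 : 0 ≤ (910/177147 : ℝ) * (t^2 * (9-16*t)^4) := mul_nonneg (by norm_num) (mul_nonneg (pow_nonneg h0.le 2) (pow_nonneg h9.le 4))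
  have e3 : 0 ≤ (81136/531441 : ℝ) * (t^3 * (9-16*t)^3) := mul_nonneg (by norm_num) (mul_nonneg (pow_nonneg h0.le 3) (pow_nonneg h9.le 3))
  have e4 : 0 ≤ (394123/177147 : ℝ) * (t^4 * (9-16*t)^2) := mul_nonneg (by norm_num) (mul_nonneg (pow_nonneg h0.le 4) (pow_nonneg h9.le 2))
  have e5 : 0 ≤ (2556256/177147 : ℝ) * (t^5 * (9-16*t)^1) := mul_nonneg (by norm_num) (mul_nonneg (pow_nonneg h0.le 5) (pow_nonneg h9.le 1))
  have e6 : 0 ≤ (6873584/531441 : ℝ) * t^6 := mul_nonneg (by norm_num) (pow_nonneg h0.le 6)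
  nlinarith [e0, e1, e2, e3, e4, e5, e6]

lemma cert_G48 {t : ℝ} (h0 : 0 < t) (h9 : 0 < 9 - 16*t) :
    0 ≤ 16 + 128*t^1 - 368*t^2 + 224*t^3 - 32*t^4 - 320*t^5 + 512*t^6 - 32*t^7 + 256*t^9 := by
  have e0 : 0 < (16/387420489 : ℝ) * (9-16*t)^9 := by positivity
  have e1 : 0 ≤ (128/14348907 : ℝ) * (t^1 * (9-16*t)^8) := mul_nonneg (by norm_num) (mul_nonneg (pow_nonneg h0.le 1) (pow_nonneg h9.le 8))
  have e2 : 0 ≤ (29456/43046721 : ℝ) * (t^2 * (9-16*t)^7) := mul_nonneg (by norm_num) (mul_nonneg (pow_nonneg h0.le 2) (pow_nonneg h9.le 7))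
  have e3 : 0 ≤ (3529120/129140163 : ℝ) * (t^3 * (9-16*t)^6) := mul_nonneg (by norm_num) (mul_nonneg (pow_nonneg h0.le 3) (pow_nonneg h9.le 6))
  have e4 : 0 ≤ (9317792/14348907 : ℝ) * (t^4 * (9-16*t)^5) := mul_nonneg (by norm_num) (mul_nonneg (pow_nonneg h0.le 4) (pow_nonneg h9.le 5))
  have e5 : 0 ≤ (412982464/43046721 : ℝ) * (t^5 * (9-16*t)^4) := mul_nonneg (by norm_num) (mul_nonneg (pow_nonneg h0.le 5) (pow_nonneg h9.le 4))
  have e6 : 0 ≤ (11241473536/129140163 : ℝ) * (t^6 * (9-16*t)^3) := mul_nonneg (by norm_num) (mul_nonneg (pow_nonneg h0.le 6) (pow_nonneg h9.le 3))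
  have e7 : 0 ≤ (2163215072/4782969 : ℝ) * (t^7 * (9-16*t)^2) := mul_nonneg (by norm_num) (mul_nonneg (pow_nonneg h0.le 7) (pow_nonneg h9.le 2))
  have e8 : 0 ≤ (49418746880/43046721 : ℝ) * (t^8 * (9-16*t)^1) := mul_nonneg (by norm_num) (mul_nonneg (pow_nonneg h0.le 8) (pow_nonneg h9.le 1))
  have e9 : 0 ≤ (501454350592/387420489 : ℝ) * t^9 := mul_nonneg (by norm_num) (pow_nonneg h0.le 9)
  nlinarith [e0, e1, e2, e3, e4, e5, e6, e7, e8, e9]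
theorem gion_Q_bijOn (t₀ q₀ : ℝ)
    (ht₀ : t₀ = (1 - Real.sqrt 5 + Real.sqrt (2 * (5 - Real.sqrt 5))) / 2)
    (hq₀ : q₀ = -3 + 3 * Real.sqrt 5 / 2 +
      (1 / 2) * Real.sqrt ((125 - 41 * Real.sqrt 5) / 2)) :
    Set.BijOn (fun t : ℝ =>
      (-1 + 22 * t ^ 2 + 16 * t ^ 3 - 33 * t ^ 4 + 16 * t ^ 6 +
        Real.sqrt (1 + 20 * t ^ 2 - 26 * t ^ 4 + 20 * t ^ 6 + t ^ 8)) /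
        (16 * t ^ 2 * (1 - t ^ 2)))
      (Set.Ioc 0 t₀) (Set.Ioc 2 q₀) := by
  set f : ℝ → ℝ := fun t : ℝ =>
      (-1 + 22 * t ^ 2 + 16 * t ^ 3 - 33 * t ^ 4 + 16 * t ^ 6 +
        Real.sqrt (1 + 20 * t ^ 2 - 26 * t ^ 4 + 20 * t ^ 6 + t ^ 8)) /
        (16 * t ^ 2 * (1 - t ^ 2)) with hfdef
  set s : ℝ := Real.sqrt 5 with hsdef
  have hs2 : s ^ 2 = 5 := Real.sq_sqrt (by norm_num)
  have hs_nonneg : 0 ≤ s := Real.sqrt_nonneg _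
  have hs_gt : 2 < s := by nlinarith [hs2, hs_nonneg]
  have hs_lt : s < 9/4 := by nlinarith [hs2, hs_nonneg]
  have hs319 : 319/144 < s := by nlinarith [hs2, hs_nonneg]
  set r : ℝ := Real.sqrt (2 * (5 - s)) with hrdef
  have hr2 : r ^ 2 = 10 - 2*s := by
    rw [hrdef, Real.sq_sqrt (by nlinarith : (0:ℝ) ≤ 2 * (5 - s))]; ring
  have hr0 : 0 ≤ r := Real.sqrt_nonneg _
  have hrgt : s - 1 < r := by nlinarith [hr2, hs2, hr0]
  have ht0_pos : 0 < t₀ := by rw [ht₀]; linarith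
  have ht2 : t₀ ^ 2 = 1 + (1 - s) * t₀ := by
    rw [ht₀]; linear_combination (1/4) * hr2 - (1/4) * hs2
  have hrlt : r < 1/8 + s := by nlinarith [hr2, hs2, hr0, hs_gt]
  have ht0_lt : t₀ < 9/16 := by rw [ht₀]; linarith
  -- q₀ in terms of s, t₀
  have hq0' : q₀ = -1/4 + 3/4*s + (s - 1/2) * t₀ := by
    have hr_eq : r = 2*t₀ - 1 + s := by rw [ht₀]; ring
    rw [hq₀]
    rw [show (125 - 41 * s) / 2 = ((s - 1/2) * r)^2 by
        linear_combination (-(1/4) + s - s^2) * hr2 + (-12 + 2*s) * hs2]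
    rw [Real.sqrt_sq (by nlinarith [hr0, hs_gt])]
    rw [hr_eq]; linear_combination (1/2) * hs2
  -- derivative of f
  have hder : ∀ x ∈ Set.Ioo (0:ℝ) (9/16), HasDerivAt f
      ((2 * Real.sqrt (1 + 20*x^2 - 26*x^4 + 20*x^6 + x^8) *
          ((44*x + 48*x^2 - 132*x^3 + 96*x^5) * (16*x^2*(1-x^2))
            - (-1 + 22*x^2 + 16*x^3 - 33*x^4 + 16*x^6) * (32*x - 64*x^3))
        + ((40*x - 104*x^3 + 120*x^5 + 8*x^7) * (16*x^2*(1-x^2))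
            - 2 * (Real.sqrt (1 + 20*x^2 - 26*x^4 + 20*x^6 + x^8))^2 * (32*x - 64*x^3)))
       / (2 * Real.sqrt (1 + 20*x^2 - 26*x^4 + 20*x^6 + x^8) * (16*x^2*(1-x^2))^2)) x := by
    intro x hx
    obtain ⟨hx0, hx9⟩ := hx
    have hx2 : x^2 < 81/256 := by nlinarith
    have hD1 : 1 ≤ 1 + 20*x^2 - 26*x^4 + 20*x^6 + x^8 := by
      nlinarith [sq_nonneg x, sq_nonneg (x^2), sq_nonneg (x^3), sq_nonneg (x^4), mul_pos hx0 hx0]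
    have hDne : (1 + 20*x^2 - 26*x^4 + 20*x^6 + x^8) ≠ 0 := by linarith
    have ha0 : 0 < Real.sqrt (1 + 20*x^2 - 26*x^4 + 20*x^6 + x^8) :=
      Real.sqrt_pos.mpr (by linarith)
    have hBpos : 0 < 16*x^2*(1-x^2) := by nlinarith
    have hD : HasDerivAt (fun t : ℝ => 1 + 20*t^2 - 26*t^4 + 20*t^6 + t^8)
        (40*x - 104*x^3 + 120*x^5 + 8*x^7) x := by
      have h := (((((hasDerivAt_pow 2 x).const_mul (20:ℝ)).const_add 1).sub
        ((hasDerivAt_pow 4 x).const_mul (26:ℝ))).add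
        ((hasDerivAt_pow 6 x).const_mul (20:ℝ))).add (hasDerivAt_pow 8 x)
      refine h.congr_deriv (Eq.symm ?_)
      push_cast; ring
    have hsq : HasDerivAt (fun t : ℝ => Real.sqrt (1 + 20*t^2 - 26*t^4 + 20*t^6 + t^8))
        (1 / (2 * Real.sqrt (1 + 20*x^2 - 26*x^4 + 20*x^6 + x^8)) *
          (40*x - 104*x^3 + 120*x^5 + 8*x^7)) x := by
      simpa [Function.comp_def] using (Real.hasDerivAt_sqrt hDne).comp x hD
    have hA : HasDerivAt (fun t : ℝ => -1 + 22*t^2 + 16*t^3 - 33*t^4 + 16*t^6)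
        (44*x + 48*x^2 - 132*x^3 + 96*x^5) x := by
      have h := (((((hasDerivAt_pow 2 x).const_mul (22:ℝ)).const_add (-1)).add
        ((hasDerivAt_pow 3 x).const_mul (16:ℝ))).sub
        ((hasDerivAt_pow 4 x).const_mul (33:ℝ))).add ((hasDerivAt_pow 6 x).const_mul (16:ℝ))
      refine h.congr_deriv (Eq.symm ?_)
      push_cast; ring
    have hB : HasDerivAt (fun t : ℝ => 16*t^2*(1-t^2)) (32*x - 64*x^3) x := by
      have h := ((hasDerivAt_pow 2 x).const_mul (16:ℝ)).mul
        (HasDerivAt.const_sub 1 (hasDerivAt_pow 2 x))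
      refine h.congr_deriv (Eq.symm ?_)
      push_cast; ring
    have h := (hA.add hsq).div hB (ne_of_gt hBpos)
    have hfun : f = fun y : ℝ =>
        (-1 + 22*y^2 + 16*y^3 - 33*y^4 + 16*y^6 +
          Real.sqrt (1 + 20*y^2 - 26*y^4 + 20*y^6 + y^8)) / (16*y^2*(1-y^2)) := by
      rw [hfdef]
    have ha2 : (Real.sqrt (1 + 20*x^2 - 26*x^4 + 20*x^6 + x^8))^2
        = 1 + 20*x^2 - 26*x^4 + 20*x^6 + x^8 := Real.sq_sqrt (by linarith)
    rw [hfun]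
    refine h.congr_deriv (Eq.symm ?_)
    simp only [Pi.add_apply]
    generalize Real.sqrt (1 + 20*x^2 - 26*x^4 + 20*x^6 + x^8) = a at ha0 ⊢
    generalize 16*x^2*(1-x^2) = B at hBpos ⊢
    field_simp
    ring
  -- monotonicity
  have hmono : StrictMonoOn f (Set.Ioo 0 (9/16)) := by
    apply strictMonoOn_of_deriv_pos (convex_Ioo _ _)
    · exact fun x hx => ((hder x hx).continuousAt).continuousWithinAt
    · rw [interior_Ioo]
      intro x hx
      rw [(hder x hx).deriv]
      obtain ⟨hx0, hx9'⟩ := hx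
      have hx9 : 0 < 9 - 16*x := by linarith
      have hx2 : x^2 < 81/256 := by nlinarith
      have hD1 : 1 ≤ 1 + 20*x^2 - 26*x^4 + 20*x^6 + x^8 := by
        nlinarith [sq_nonneg x, sq_nonneg (x^2), sq_nonneg (x^3), sq_nonneg (x^4), mul_pos hx0 hx0]
      have ha0 : 0 < Real.sqrt (1 + 20*x^2 - 26*x^4 + 20*x^6 + x^8) :=
        Real.sqrt_pos.mpr (by linarith)
      have ha2 : (Real.sqrt (1 + 20*x^2 - 26*x^4 + 20*x^6 + x^8))^2
          = 1 + 20*x^2 - 26*x^4 + 20*x^6 + x^8 := Real.sq_sqrt (by linarith)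
      have hBpos : 0 < 16*x^2*(1-x^2) := by nlinarith
      rw [ha2]
      apply div_pos
      · have hW : 0 < (44*x + 48*x^2 - 132*x^3 + 96*x^5) * (16*x^2*(1-x^2))
            - (-1 + 22*x^2 + 16*x^3 - 33*x^4 + 16*x^6) * (32*x - 64*x^3) := by
          nlinarith [mul_pos hx0 (cert_Winn hx0 hx9)]
        have hP : 0 < 4*(1 + 20*x^2 - 26*x^4 + 20*x^6 + x^8) *
            ((44*x + 48*x^2 - 132*x^3 + 96*x^5) * (16*x^2*(1-x^2))
              - (-1 + 22*x^2 + 16*x^3 - 33*x^4 + 16*x^6) * (32*x - 64*x^3))^2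
            - ((40*x - 104*x^3 + 120*x^5 + 8*x^7) * (16*x^2*(1-x^2))
              - 2*(1 + 20*x^2 - 26*x^4 + 20*x^6 + x^8) * (32*x - 64*x^3))^2 := by
          nlinarith [mul_pos (pow_pos hx0 5) (cert_R hx0 hx9)]
        have h2aW : 0 < 2 * Real.sqrt (1 + 20*x^2 - 26*x^4 + 20*x^6 + x^8) *
            ((44*x + 48*x^2 - 132*x^3 + 96*x^5) * (16*x^2*(1-x^2))
              - (-1 + 22*x^2 + 16*x^3 - 33*x^4 + 16*x^6) * (32*x - 64*x^3)) :=
          mul_pos (mul_pos two_pos ha0) hW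
        nlinarith [hP, h2aW, ha2, sq_nonneg (2 * Real.sqrt (1 + 20*x^2 - 26*x^4 + 20*x^6 + x^8) *
            ((44*x + 48*x^2 - 132*x^3 + 96*x^5) * (16*x^2*(1-x^2))
              - (-1 + 22*x^2 + 16*x^3 - 33*x^4 + 16*x^6) * (32*x - 64*x^3))
          + ((40*x - 104*x^3 + 120*x^5 + 8*x^7) * (16*x^2*(1-x^2))
              - 2*(1 + 20*x^2 - 26*x^4 + 20*x^6 + x^8) * (32*x - 64*x^3))),
          sq_nonneg ((44*x + 48*x^2 - 132*x^3 + 96*x^5) * (16*x^2*(1-x^2))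
              - (-1 + 22*x^2 + 16*x^3 - 33*x^4 + 16*x^6) * (32*x - 64*x^3))]
      · exact mul_pos (mul_pos two_pos ha0) (pow_pos hBpos 2)
  -- value at t₀
  have hBt0 : 0 < 16 * t₀ ^ 2 * (1 - t₀ ^ 2) := by nlinarith [ht0_pos, ht0_lt]
  have hE0 : 0 ≤ -6 + 6*s + (-36 + 12*s)*t₀ := by
    nlinarith [mul_pos (show (0:ℝ) < 9/16 - t₀ by linarith)
      (show (0:ℝ) < 36 - 12*s by nlinarith), hs319]
  have hft0 : f t₀ = q₀ := by
    have hfv : f t₀ = (-1 + 22 * t₀ ^ 2 + 16 * t₀ ^ 3 - 33 * t₀ ^ 4 + 16 * t₀ ^ 6 +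
        Real.sqrt (1 + 20 * t₀ ^ 2 - 26 * t₀ ^ 4 + 20 * t₀ ^ 6 + t₀ ^ 8)) /
        (16 * t₀ ^ 2 * (1 - t₀ ^ 2)) := by rw [hfdef]
    have hDE : 1 + 20 * t₀ ^ 2 - 26 * t₀ ^ 4 + 20 * t₀ ^ 6 + t₀ ^ 8
        = (-6 + 6*s + (-36 + 12*s)*t₀)^2 := by
      linear_combination ((-1215) + 42*t₀ + 19*t₀^2 + 23*t₀^3 + 22*t₀^4 + t₀^5 + t₀^6
        + 678*s - 94*s*t₀ - 50*s*t₀^2 - 25*s*t₀^3 - 2*s*t₀^4 - s*t₀^5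
        + 61*s^2 + 82*s^2*t₀ + 29*s^2*t₀^2 + 3*s^2*t₀^3 + s^2*t₀^4
        - 120*s^3 - 34*s^3*t₀ - 4*s^3*t₀^2 - s^3*t₀^3
        + 40*s^4 + 5*s^4*t₀ + s^4*t₀^2 - 6*s^5 - s^5*t₀ + s^6) * ht2
        + (250 + 321*t₀ - 150*s - 475*s*t₀ + 45*s^2 + 200*s^2*t₀ - 6*s^3 - 52*s^3*t₀
        + s^4 + 7*s^4*t₀ - s^5*t₀) * hs2
    rw [hfv, hDE, Real.sqrt_sq hE0, div_eq_iff (ne_of_gt hBt0), hq0']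
    linear_combination (32 + 19*t₀ - 13*t₀^2 + 8*t₀^3 + 16*t₀^4 - 26*s + s*t₀ + 4*s*t₀^2
      - 5*s^2 - 4*s^2*t₀ + 4*s^3) * ht2
      + ((-5) - 3*t₀ + 4*s + 9*s*t₀ - 4*s^2*t₀) * hs2
  -- lower bound f > 2 on the interval
  have hf_gt2 : ∀ x ∈ Set.Ioo (0:ℝ) (9/16), 2 < f x := by
    intro x hx
    obtain ⟨hx0, hx9'⟩ := hx
    have hx9 : 0 < 9 - 16*x := by linarith
    have hx2 : x^2 < 81/256 := by nlinarith
    have hBpos : 0 < 16 * x ^ 2 * (1 - x ^ 2) := by nlinarith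
    have hDU : (1 + 10*x^2 - 16*x^3 + x^4 - 16*x^6)^2
        < 1 + 20 * x ^ 2 - 26 * x ^ 4 + 20 * x ^ 6 + x ^ 8 := by
      nlinarith [mul_pos (pow_pos hx0 3) (cert_M hx0 hx9)]
    have hU0 : 0 ≤ 1 + 10*x^2 - 16*x^3 + x^4 - 16*x^6 := by
      linarith [cert_Uh hx0 hx9]
    have haU : 1 + 10*x^2 - 16*x^3 + x^4 - 16*x^6
        < Real.sqrt (1 + 20 * x ^ 2 - 26 * x ^ 4 + 20 * x ^ 6 + x ^ 8) :=
      (Real.lt_sqrt hU0).mpr hDU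
    have hfv : f x = (-1 + 22 * x ^ 2 + 16 * x ^ 3 - 33 * x ^ 4 + 16 * x ^ 6 +
        Real.sqrt (1 + 20 * x ^ 2 - 26 * x ^ 4 + 20 * x ^ 6 + x ^ 8)) /
        (16 * x ^ 2 * (1 - x ^ 2)) := by rw [hfdef]
    rw [hfv, lt_div_iff₀ hBpos]
    nlinarith [haU]
  -- upper bound f x ≤ 2 + 3x
  have hf_le : ∀ x ∈ Set.Ioo (0:ℝ) (9/16), f x ≤ 2 + 3*x := by
    intro x hx
    obtain ⟨hx0, hx9'⟩ := hx
    have hx9 : 0 < 9 - 16*x := by linarith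
    have hx2 : x^2 < 81/256 := by nlinarith
    have hBpos : 0 < 16 * x ^ 2 * (1 - x ^ 2) := by nlinarith
    have hD1 : 1 ≤ 1 + 20 * x ^ 2 - 26 * x ^ 4 + 20 * x ^ 6 + x ^ 8 := by
      nlinarith [sq_nonneg x, sq_nonneg (x^2), sq_nonneg (x^3), sq_nonneg (x^4), mul_pos hx0 hx0]
    have ha2 : (Real.sqrt (1 + 20 * x ^ 2 - 26 * x ^ 4 + 20 * x ^ 6 + x ^ 8))^2
        = 1 + 20 * x ^ 2 - 26 * x ^ 4 + 20 * x ^ 6 + x ^ 8 := Real.sq_sqrt (by linarith)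
    have ha1 : 1 ≤ Real.sqrt (1 + 20 * x ^ 2 - 26 * x ^ 4 + 20 * x ^ 6 + x ^ 8) := by
      nlinarith [ha2, Real.sqrt_nonneg (1 + 20 * x ^ 2 - 26 * x ^ 4 + 20 * x ^ 6 + x ^ 8)]
    have hU12 : 1/2 ≤ 1 + 10*x^2 - 16*x^3 + x^4 - 16*x^6 := by
      linarith [cert_Uh hx0 hx9]
    have hDU : (1 + 10*x^2 - 16*x^3 + x^4 - 16*x^6)^2
        < 1 + 20 * x ^ 2 - 26 * x ^ 4 + 20 * x ^ 6 + x ^ 8 := by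
      nlinarith [mul_pos (pow_pos hx0 3) (cert_M hx0 hx9)]
    have haU : 1 + 10*x^2 - 16*x^3 + x^4 - 16*x^6
        < Real.sqrt (1 + 20 * x ^ 2 - 26 * x ^ 4 + 20 * x ^ 6 + x ^ 8) :=
      (Real.lt_sqrt (by linarith)).mpr hDU
    have h1 : (Real.sqrt (1 + 20 * x ^ 2 - 26 * x ^ 4 + 20 * x ^ 6 + x ^ 8)
          - (1 + 10*x^2 - 16*x^3 + x^4 - 16*x^6)) *
        (Real.sqrt (1 + 20 * x ^ 2 - 26 * x ^ 4 + 20 * x ^ 6 + x ^ 8)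
          + (1 + 10*x^2 - 16*x^3 + x^4 - 16*x^6))
        = x^3 * (32 - 128*x + 320*x^2 - 224*x^3 + 32*x^4 + 320*x^5 - 512*x^6 + 32*x^7 - 256*x^9) := by
      linear_combination ha2
    have h2 : x^3 * (32 - 128*x + 320*x^2 - 224*x^3 + 32*x^4 + 320*x^5 - 512*x^6 + 32*x^7 - 256*x^9)
        ≤ 3*x*(16 * x ^ 2 * (1 - x ^ 2)) := by
      nlinarith [mul_nonneg (pow_nonneg hx0.le 3) (cert_G48 hx0 hx9)]
    have h3 : Real.sqrt (1 + 20 * x ^ 2 - 26 * x ^ 4 + 20 * x ^ 6 + x ^ 8)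
          - (1 + 10*x^2 - 16*x^3 + x^4 - 16*x^6)
        ≤ (Real.sqrt (1 + 20 * x ^ 2 - 26 * x ^ 4 + 20 * x ^ 6 + x ^ 8)
          - (1 + 10*x^2 - 16*x^3 + x^4 - 16*x^6)) *
        (Real.sqrt (1 + 20 * x ^ 2 - 26 * x ^ 4 + 20 * x ^ 6 + x ^ 8)
          + (1 + 10*x^2 - 16*x^3 + x^4 - 16*x^6)) := by
      nlinarith [mul_nonneg (by linarith : (0:ℝ) ≤ Real.sqrt (1 + 20 * x ^ 2 - 26 * x ^ 4 + 20 * x ^ 6 + x ^ 8) - (1 + 10*x^2 - 16*x^3 + x^4 - 16*x^6))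
        (by linarith : (0:ℝ) ≤ Real.sqrt (1 + 20 * x ^ 2 - 26 * x ^ 4 + 20 * x ^ 6 + x ^ 8) + (1 + 10*x^2 - 16*x^3 + x^4 - 16*x^6) - 1)]
    have hfv : f x = (-1 + 22 * x ^ 2 + 16 * x ^ 3 - 33 * x ^ 4 + 16 * x ^ 6 +
        Real.sqrt (1 + 20 * x ^ 2 - 26 * x ^ 4 + 20 * x ^ 6 + x ^ 8)) /
        (16 * x ^ 2 * (1 - x ^ 2)) := by rw [hfdef]
    rw [hfv, div_le_iff₀ hBpos]
    nlinarith [h1, h2, h3]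
  -- MapsTo
  have hsub : Set.Ioc 0 t₀ ⊆ Set.Ioo (0:ℝ) (9/16) := by
    intro x hx; exact ⟨hx.1, lt_of_le_of_lt hx.2 ht0_lt⟩
  have ht0mem : t₀ ∈ Set.Ioo (0:ℝ) (9/16) := ⟨ht0_pos, ht0_lt⟩
  have hmaps : Set.MapsTo f (Set.Ioc 0 t₀) (Set.Ioc 2 q₀) := by
    intro x hx
    refine ⟨hf_gt2 x (hsub hx), ?_⟩
    rcases eq_or_lt_of_le hx.2 with h | h
    · rw [h, hft0]
    · have := hmono (hsub hx) ht0mem h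
      rw [hft0] at this
      exact this.le
  -- SurjOn
  have hsurj : Set.SurjOn f (Set.Ioc 0 t₀) (Set.Ioc 2 q₀) := by
    intro y hy
    rcases eq_or_lt_of_le hy.2 with hyq | hyq
    · exact ⟨t₀, ⟨ht0_pos, le_refl t₀⟩, by rw [hft0, ← hyq]⟩
    · have hy2 : 0 < y - 2 := by linarith [hy.1]
      set ε := min t₀ ((y-2)/6) with hεdef
      have hε0 : 0 < ε := lt_min ht0_pos (by linarith)
      have hεt0 : ε ≤ t₀ := min_le_left _ _
      have hεI : ε ∈ Set.Ioo (0:ℝ) (9/16) := ⟨hε0, lt_of_le_of_lt hεt0 ht0_lt⟩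
      have hfε : f ε < y := by
        have h1 := hf_le ε hεI
        have h2 : ε ≤ (y-2)/6 := min_le_right _ _
        linarith
      have hcont : ContinuousOn f (Set.Icc ε t₀) := fun x hx =>
        ((hder x ⟨lt_of_lt_of_le hε0 hx.1, lt_of_le_of_lt hx.2 ht0_lt⟩).continuousAt).continuousWithinAt
      have hIVT := intermediate_value_Icc hεt0 hcont
      have hyIcc : y ∈ Set.Icc (f ε) (f t₀) := ⟨hfε.le, by rw [hft0]; exact hyq.le⟩
      obtain ⟨x, hxI, hfx⟩ := hIVT hyIcc
      exact ⟨x, ⟨lt_of_lt_of_le hε0 hxI.1, hxI.2⟩, hfx⟩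
  exact ⟨hmaps, (hmono.mono hsub).injOn, hsurj⟩
end

section
/- For every real number q with 2 < q ≤ q₀, where q₀ := −3 + (3√5)/2 + (1/2)·√((125 − 41√5)/2), there exists a unique real number t with 0 < t ≤ t₀ := (1 − √5 + √(2(5 − √5)))/2 such that P(t, q) = 0, where P(t, q) = 8t¹⁰ + (16q − 33)t⁸ + 16t⁷ + (8q² − 49q + 56)t⁶ + (16q − 33)t⁵ − (16q² − 55q + 39)t⁴ − (16q − 22)t³ + (8q² − 23q + 18)t² − t + q − 2. -/
set_option maxHeartbeats 4000000

/-- The Gion polynomial. -/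
def Gion (q t : ℝ) : ℝ :=
  8 * t ^ 10 + (16 * q - 33) * t ^ 8 + 16 * t ^ 7 +
    (8 * q ^ 2 - 49 * q + 56) * t ^ 6 + (16 * q - 33) * t ^ 5 -
    (16 * q ^ 2 - 55 * q + 39) * t ^ 4 - (16 * q - 22) * t ^ 3 +
    (8 * q ^ 2 - 23 * q + 18) * t ^ 2 - t + q - 2

/-- Its t-derivative. -/
def GionD (q t : ℝ) : ℝ :=
  80*t^9 + 8*(16*q-33)*t^7 + 112*t^6 + 6*(8*q^2-49*q+56)*t^5 + 5*(16*q-33)*t^4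
    - 4*(16*q^2-55*q+39)*t^3 - 3*(16*q-22)*t^2 + 2*(8*q^2-23*q+18)*t - 1

theorem gion_hasDerivAt (q τ : ℝ) : HasDerivAt (fun t : ℝ => Gion q t) (GionD q τ) τ := by
  have H := (((((((((((hasDerivAt_pow 10 τ).const_mul (8:ℝ)).add
    ((hasDerivAt_pow 8 τ).const_mul (16*q-33))).add
    ((hasDerivAt_pow 7 τ).const_mul (16:ℝ))).add
    ((hasDerivAt_pow 6 τ).const_mul (8*q^2-49*q+56))).add
    ((hasDerivAt_pow 5 τ).const_mul (16*q-33))).sub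
    ((hasDerivAt_pow 4 τ).const_mul (16*q^2-55*q+39))).sub
    ((hasDerivAt_pow 3 τ).const_mul (16*q-22))).add
    ((hasDerivAt_pow 2 τ).const_mul (8*q^2-23*q+18))).sub
    (hasDerivAt_id τ)).add_const q).sub_const (2:ℝ)
  refine H.congr_deriv ?_
  unfold GionD; push_cast; ring

theorem gion_L1 (t : ℝ) (h0 : 0 ≤ t) (h1 : t ≤ 0.5576) :
    16*t^10-80*t^9-2*t^8+40*t^7-132*t^6+58*t^5+19*t^4-48*t^3+38*t^2-10*t+1 ≥ 0.09 := by
  nlinarith [sq_nonneg t, sq_nonneg (t-0.19), sq_nonneg (t^2-0.04), mul_nonneg h0 h0,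
    sq_nonneg (t^3), mul_nonneg (mul_nonneg h0 h0) h0, sq_nonneg (t^4), sq_nonneg (t*(t-0.19)),
    sq_nonneg (t^2*(t-0.19)), sq_nonneg (t^3*(t-0.19)), sq_nonneg (t^4*(t-0.19)),
    mul_nonneg (sub_nonneg.2 h1) h0]

theorem gion_L2 (t : ℝ) (h0 : 0 ≤ t) (h1 : t ≤ 0.5576) :
    16*t^10-80*t^9+10.64*t^8-10.56*t^7-142.9336*t^6+103.4408*t^5-24.7028*t^4-36.4344*t^3+66.5664*t^2-19.6064*t+1.79 ≥ 0.09 := by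
  nlinarith [sq_nonneg t, sq_nonneg (t-0.17), sq_nonneg (t^2-0.03), sq_nonneg (t*(t-0.17)),
    sq_nonneg (t^2*(t-0.17)), sq_nonneg (t^3*(t-0.17)), sq_nonneg (t^4*(t-0.17)),
    mul_nonneg (sub_nonneg.2 h1) h0, mul_nonneg (mul_nonneg h0 h0) h0]

theorem gion_L3 (t : ℝ) (h0 : 0 ≤ t) (h1 : t ≤ 0.5576) :
    16*t^6-48*t^5-32*t^4+64*t^3+16*t^2-16*t ≤ 2 := by
  nlinarith [sq_nonneg t, sq_nonneg (t-0.5), sq_nonneg (t*(t-0.5)), sq_nonneg (t^2*(t-0.5)),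
    mul_nonneg (sub_nonneg.2 h1) h0, sq_nonneg (t^2-0.3)]

theorem gion_key (t q : ℝ) (h0 : 0 ≤ t) (h1 : t ≤ 0.5576) (h2 : 2 ≤ q) (h3 : q ≤ 2.395) :
    GionD q t ≤ 2 * Gion q t - 0.01 := by
  unfold Gion GionD
  obtain ⟨x, rfl⟩ : ∃ x, q = x + 2 := ⟨q - 2, by ring⟩
  have hx0 : 0 ≤ x := by linarith
  have hxm : x ≤ 0.395 := by linarith
  have T1 := mul_nonneg (by linarith : (0:ℝ) ≤ 0.395 - x)
    (by linarith [gion_L1 t h0 h1] : (0:ℝ) ≤ 16*t^10-80*t^9-2*t^8+40*t^7-132*t^6+58*t^5+19*t^4-48*t^3+38*t^2-10*t+1 - 0.09)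
  have T2 := mul_nonneg hx0
    (by linarith [gion_L2 t h0 h1] : (0:ℝ) ≤ 16*t^10-80*t^9+10.64*t^8-10.56*t^7-142.9336*t^6+103.4408*t^5-24.7028*t^4-36.4344*t^3+66.5664*t^2-19.6064*t+1.79 - 0.09)
  have T3 := mul_nonneg (mul_nonneg hx0 (by linarith : (0:ℝ) ≤ 0.395 - x))
    (by linarith [gion_L3 t h0 h1] : (0:ℝ) ≤ 2 - (16*t^6-48*t^5-32*t^4+64*t^3+16*t^2-16*t))
  have T4 : x * (0.395 - x) ≤ 0.0390067 := by nlinarith [sq_nonneg (x - 0.1975)]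
  nlinarith [T1, T2, T3, T4]

theorem gion_alg (r s : ℝ) (hr : r^2 = 5) (hs : s^2 = 10 - 2*r) :
    Gion (-3+3*r/2+s*(2*r-1)/4) ((1-r+s)/2) = 0 := by
  unfold Gion
  linear_combination ((11471/256) + (35767/256)*s + (19887/128)*s^2 + (15041/256)*s^3 + (-599/64)*s^4 + (-3221/256)*s^5 + (-255/128)*s^6 + (17/32)*s^7 + (17/128)*s^8 + (-2939/128)*r + (-3285/32)*r*s + (-969/8)*r*s^2 + (-4377/128)*r*s^3 + (1749/128)*r*s^4 + (801/128)*r*s^5 + (-11/32)*r*s^6 + (-1/4)*r*s^7 + (4141/256)*r^2 + (2185/32)*r^2*s + (3037/64)*r^2*s^2 + (-1453/256)*r^2*s^3 + (-129/16)*r^2*s^4 + (1/16)*r^2*s^5 + (23/64)*r^2*s^6 + (-981/64)*r^3 + (-3371/128)*r^3*s + (5/8)*r^3*s^2 + (931/128)*r^3*s^3 + (1/4)*r^3*s^4 + (-13/32)*r^3*s^5 + (1431/256)*r^4 + (-55/256)*r^4*s + (-311/64)*r^4*s^2 + (-7/16)*r^4*s^3 + (23/64)*r^4*s^4 + (27/128)*r^5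 + (265/128)*r^5*s + (11/32)*r^5*s^2 + (-1/4)*r^5*s^3 + (-101/256)*r^6 + (-1/8)*r^6*s + (17/128)*r^6*s^2 + (1/64)*r^7 + (-3/64)*r^7*s + (1/128)*r^8) * hr + ((-395/16) + (-2339/32)*s + (-2473/32)*s^2 + (-2129/64)*s^3 + (-261/64)*s^4 + (461/256)*s^5 + (169/256)*s^6 + (1/16)*s^7 + (1/128)*s^8 + (177/16)*r + (1049/32)*r*s + (1101/32)*r*s^2 + (969/64)*r*s^3 + (201/128)*r*s^4 + (-91/128)*r*s^5 + (-9/32)*r*s^6 + (-3/64)*r*s^7) * hs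

theorem gion_alg2 (r s : ℝ) (hr : r^2 = 5) (hs : s^2 = 10 - 2*r) :
    Gion 2 ((1-r+s)/2) = 600860 + 157683*s - 268372*r - 70663*(r*s) := by
  unfold Gion
  linear_combination ((9506707/256) + (641895/64)*s + (368753/128)*s^2 + (29871/32)*s^3 + (38351/128)*s^4 + (1403/16)*s^5 + (155/8)*s^6 + (95/32)*s^7 + (45/128)*s^8 + (-3503/64)*r + (-10337/64)*r*s + (-6805/32)*r*s^2 + (-5305/32)*r*s^3 + (-1365/16)*r*s^4 + (-469/16)*r*s^5 + (-105/16)*r*s^6 + (-15/16)*r*s^7 + (6297/256)*r^2 + (4525/64)*r^2*s + (11675/128)*r^2*s^2 + (2205/32)*r^2*s^3 + (4165/128)*r^2*s^4 + (315/32)*r^2*s^5 + (105/64)*r^2*s^6 + (-673/64)*r^3 + (-1879/64)*r^3*s + (-1143/32)*r^3*s^2 + (-773/32)*r^3*s^3 + (-315/32)*r^3*s^4 + (-63/32)*r^3*s^5 + (1071/256)*r^4 + (687/64)*r^4*s + (1471/128)*r^4*s^2 + (105/16)*r^4*s^3 + (105/64)*r^4*s^4 + (-91/64)*r^5 + (-203/64)*r^5*s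 + (-45/16)*r^5*s^2 + (-15/16)*r^5*s^3 + (99/256)*r^6 + (45/64)*r^6*s + (45/128)*r^6*s^2 + (-5/64)*r^7 + (-5/64)*r^7*s + (1/128)*r^8) * hr + ((166073/4) + (172057/16)*s + (21691/8)*s^2 + (19469/32)*s^3 + (15483/128)*s^4 + (533/32)*s^5 + (559/256)*s^6 + (5/64)*s^7 + (1/128)*s^8 + (-74025/4)*r + (-77357/16)*r*s + (-9611/8)*r*s^2 + (-4439/16)*r*s^3 + (-6603/128)*r*s^4 + (-269/32)*r*s^5 + (-23/32)*r*s^6 + (-5/64)*r*s^7) * hs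

theorem gion_existence_uniqueness (q₀ t₀ : ℝ)
    (hq₀ : q₀ = -3 + 3 * Real.sqrt 5 / 2 +
      (1 / 2) * Real.sqrt ((125 - 41 * Real.sqrt 5) / 2))
    (ht₀ : t₀ = (1 - Real.sqrt 5 + Real.sqrt (2 * (5 - Real.sqrt 5))) / 2)
    (q : ℝ) (hq1 : 2 < q) (hq2 : q ≤ q₀) :
    ∃! t : ℝ, (0 < t ∧ t ≤ t₀) ∧
      8 * t ^ 10 + (16 * q - 33) * t ^ 8 + 16 * t ^ 7 +
        (8 * q ^ 2 - 49 * q + 56) * t ^ 6 + (16 * q - 33) * t ^ 5 -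
        (16 * q ^ 2 - 55 * q + 39) * t ^ 4 - (16 * q - 22) * t ^ 3 +
        (8 * q ^ 2 - 23 * q + 18) * t ^ 2 - t + q - 2 = 0 := by
  suffices h : ∃! t : ℝ, (0 < t ∧ t ≤ t₀) ∧ Gion q t = 0 by exact h
  have hrnn : (0:ℝ) ≤ Real.sqrt 5 := Real.sqrt_nonneg 5
  set r : ℝ := Real.sqrt 5 with hrdef
  have hr : r^2 = 5 := Real.sq_sqrt (by norm_num)
  have hrl : 2.23606797 < r := by nlinarith
  have hru : r < 2.23606798 := by nlinarith
  have hsnn : (0:ℝ) ≤ Real.sqrt (2*(5 - r)) := Real.sqrt_nonneg _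
  set s : ℝ := Real.sqrt (2*(5 - r)) with hsdef
  have hs : s^2 = 10 - 2*r := by
    rw [hsdef, Real.sq_sqrt (by nlinarith)]; ring
  have hsl : 2.35114100 < s := by nlinarith
  have hsu : s < 2.35114101 := by nlinarith
  -- the nested radical
  have hw : Real.sqrt ((125 - 41*r)/2) = s*(2*r-1)/2 := by
    rw [show (125 - 41*r)/2 = (s*(2*r-1)/2)^2 by linear_combination (2*r-12) * hr - ((2*r-1)^2/4) * hs,
      Real.sqrt_sq (by nlinarith)]
  have hq0v : q₀ = -3+3*r/2+s*(2*r-1)/4 := by rw [hq₀, hw]; ring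
  have ht0v : t₀ = (1-r+s)/2 := ht₀
  have hrs_l : (0:ℝ) ≤ (r - 2.23606797) * (s - 2.35114100) :=
    mul_nonneg (by linarith) (by linarith)
  have hrs_u : (0:ℝ) ≤ (2.23606798 - r) * (2.35114101 - s) :=
    mul_nonneg (by linarith) (by linarith)
  have ht0u : t₀ ≤ 0.5576 := by rw [ht0v]; linarith
  have ht0nn : (0:ℝ) ≤ t₀ := by rw [ht0v]; linarith
  have hq0u : q₀ ≤ 2.395 := by rw [hq0v]; nlinarith [hrs_u]
  have hq3 : q ≤ 2.395 := hq2.trans hq0u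
  -- value at t₀ and q₀
  have Pq0 : Gion q₀ t₀ = 0 := by rw [hq0v, ht0v]; exact gion_alg r s hr hs
  have P2v : Gion 2 t₀ = 600860 + 157683*s - 268372*r - 70663*(r*s) := by
    rw [ht0v]; exact gion_alg2 r s hr hs
  have P2neg : Gion 2 t₀ < 0 := by rw [P2v]; nlinarith [hrs_l]
  -- convexity in q gives Gion q t₀ ≤ 0
  have hft0 : Gion q t₀ ≤ 0 := by
    have conv : (q₀-2) * Gion q t₀ = (q₀-q) * Gion 2 t₀ + (q-2) * Gion q₀ t₀
        - (8*(t₀*(t₀^2-1))^2) * ((q-2)*((q₀-q)*(q₀-2))) := by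
      unfold Gion; ring
    rw [Pq0] at conv
    have h1 : (q₀-q) * Gion 2 t₀ ≤ 0 :=
      mul_nonpos_of_nonneg_of_nonpos (by linarith) P2neg.le
    have h2 : (0:ℝ) ≤ (8*(t₀*(t₀^2-1))^2) * ((q-2)*((q₀-q)*(q₀-2))) :=
      mul_nonneg (by positivity) (mul_nonneg (by linarith)
        (mul_nonneg (by linarith) (by linarith)))
    nlinarith [conv, h1, h2]
  -- the auxiliary strictly decreasing function
  set g : ℝ → ℝ := fun t => Gion q t * Real.exp (-2*t) with hgdef
  have Hg : ∀ τ : ℝ, HasDerivAt g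
      ((GionD q τ - 2 * Gion q τ) * Real.exp (-2*τ)) τ := by
    intro τ
    have H := (gion_hasDerivAt q τ).mul (((hasDerivAt_id τ).const_mul (-2:ℝ)).exp)
    simp only [id_eq] at H
    refine H.congr_deriv ?_
    ring
  have hganti : StrictAntiOn g (Set.Icc 0 t₀) := by
    apply strictAntiOn_of_deriv_neg (convex_Icc 0 t₀)
    · exact fun x _ => ((Hg x).differentiableAt.continuousAt).continuousWithinAt
    · intro x hx
      rw [interior_Icc] at hx
      rw [(Hg x).deriv]
      have hk : GionD q x ≤ 2 * Gion q x - 0.01 :=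
        gion_key x q hx.1.le (hx.2.le.trans ht0u) hq1.le hq3
      have he : (0:ℝ) < Real.exp (-2*x) := Real.exp_pos _
      have := mul_le_mul_of_nonneg_right (by linarith : GionD q x - 2 * Gion q x ≤ -0.01) he.le
      nlinarith [this, he]
  -- existence via IVT
  have hfc : ContinuousOn (fun t => Gion q t) (Set.Icc 0 t₀) :=
    fun x _ => ((gion_hasDerivAt q x).differentiableAt.continuousAt).continuousWithinAt
  have hf0 : Gion q 0 = q - 2 := by unfold Gion; norm_num
  have hmem : (0:ℝ) ∈ Set.Icc (Gion q t₀) (Gion q 0) := by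
    constructor
    · exact hft0
    · rw [hf0]; linarith
  obtain ⟨c, hcmem, hc⟩ := intermediate_value_Icc' ht0nn hfc hmem
  have hc' : Gion q c = 0 := hc
  have hc0 : 0 < c := by
    rcases eq_or_lt_of_le hcmem.1 with h | h
    · exfalso; rw [← h, hf0] at hc'; linarith
    · exact h
  refine ⟨c, ⟨⟨hc0, hcmem.2⟩, hc'⟩, ?_⟩
  rintro y ⟨⟨hy0, hyt⟩, hfy⟩
  have hymem : y ∈ Set.Icc (0:ℝ) t₀ := ⟨hy0.le, hyt⟩
  have hcmem' : c ∈ Set.Icc (0:ℝ) t₀ := ⟨hc0.le, hcmem.2⟩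
  have hgy : g y = 0 := by simp [hgdef, hfy]
  have hgc : g c = 0 := by simp [hgdef, hc']
  rcases lt_trichotomy y c with h | h | h
  · exfalso; have := hganti hymem hcmem' h; rw [hgy, hgc] at this; exact lt_irrefl 0 this
  · exact h
  · exfalso; have := hganti hcmem' hymem h; rw [hgy, hgc] at this; exact lt_irrefl 0 this
end

section
/- Any real root t of the polynomial P(X, 9/4) = 8X¹⁰ + 3X⁸ + 16X⁷ − (55/4)X⁶ + 3X⁵ + (15/4)X⁴ − 14X³ + (27/4)X² − X + 1/4 is algebraic over ℚ of degree exactly 10, i.e., the field extension ℚ(t)/ℚ has degree 10. -/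
open Polynomial

set_option maxHeartbeats 2000000

instance : Fact (Nat.Prime 5) := ⟨by norm_num⟩
instance : Fact (Nat.Prime 13) := ⟨by norm_num⟩

noncomputable def Rz : Polynomial ℤ := X ^ 10 - 4 * X ^ 9 + 27 * X ^ 8 - 56 * X ^ 7 + 15 * X ^ 6 + 12 * X ^ 5 - 55 * X ^ 4 + 64 * X ^ 3 + 12 * X ^ 2 + 32

lemma Rz_monic : Rz.Monic := by unfold Rz; monicity!

lemma Rz_natDegree : Rz.natDegree = 10 := by unfold Rz; compute_degree!

lemma coeffs1 {K : Type*} [CommRing K] (r0 : K)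
    (h : (Polynomial.C r0 : Polynomial K) = 0) : r0 = 0 := by
  refine ?_
  simpa using congrArg (fun q => Polynomial.coeff q 0) h

lemma coeffs2 {K : Type*} [CommRing K] (r0 r1 : K)
    (h : (Polynomial.C r0 + Polynomial.C r1 * Polynomial.X : Polynomial K) = 0) : r0 = 0 ∧ r1 = 0 := by
  refine ⟨?_, ?_⟩
  · simpa using congrArg (fun q => Polynomial.coeff q 0) h
  · simpa using congrArg (fun q => Polynomial.coeff q 1) h

lemma coeffs3 {K : Type*} [CommRing K] (r0 r1 r2 : K)
    (h : (Polynomial.C r0 + Polynomial.C r1 * Polynomial.X + Polynomial.C r2 * Polynomial.X ^ 2 : Polynomial K) = 0) : r0 = 0 ∧ r1 = 0 ∧ r2 = 0 := by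
  refine ⟨?_, ?_, ?_⟩
  · simpa using congrArg (fun q => Polynomial.coeff q 0) h
  · simpa using congrArg (fun q => Polynomial.coeff q 1) h
  · simpa using congrArg (fun q => Polynomial.coeff q 2) h

lemma coeffs4 {K : Type*} [CommRing K] (r0 r1 r2 r3 : K)
    (h : (Polynomial.C r0 + Polynomial.C r1 * Polynomial.X + Polynomial.C r2 * Polynomial.X ^ 2 + Polynomial.C r3 * Polynomial.X ^ 3 : Polynomial K) = 0) : r0 = 0 ∧ r1 = 0 ∧ r2 = 0 ∧ r3 = 0 := by
  refine ⟨?_, ?_, ?_, ?_⟩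
  · simpa using congrArg (fun q => Polynomial.coeff q 0) h
  · simpa using congrArg (fun q => Polynomial.coeff q 1) h
  · simpa using congrArg (fun q => Polynomial.coeff q 2) h
  · simpa using congrArg (fun q => Polynomial.coeff q 3) h

lemma coeffs5 {K : Type*} [CommRing K] (r0 r1 r2 r3 r4 : K)
    (h : (Polynomial.C r0 + Polynomial.C r1 * Polynomial.X + Polynomial.C r2 * Polynomial.X ^ 2 + Polynomial.C r3 * Polynomial.X ^ 3 + Polynomial.C r4 * Polynomial.X ^ 4 : Polynomial K) = 0) : r0 = 0 ∧ r1 = 0 ∧ r2 = 0 ∧ r3 = 0 ∧ r4 = 0 := by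
  refine ⟨?_, ?_, ?_, ?_, ?_⟩
  · simpa using congrArg (fun q => Polynomial.coeff q 0) h
  · simpa using congrArg (fun q => Polynomial.coeff q 1) h
  · simpa using congrArg (fun q => Polynomial.coeff q 2) h
  · simpa using congrArg (fun q => Polynomial.coeff q 3) h
  · simpa using congrArg (fun q => Polynomial.coeff q 4) h

lemma expand1 {K : Type*} [CommRing K] [Nontrivial K] (q : Polynomial K) (hm : q.Monic)
    (hd : q.natDegree = 1) : q = Polynomial.X + Polynomial.C (q.coeff 0) := by
  have h1 : q.coeff 1 = 1 := by rw [← hd]; exact hm.coeff_natDegree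
  conv_lhs => rw [q.as_sum_range' 2 (by omega)]
  simp only [Finset.sum_range_succ, Finset.sum_range_zero, ← Polynomial.C_mul_X_pow_eq_monomial, h1, Polynomial.C_1, one_mul, zero_add, pow_zero, mul_one, pow_one]
  ring

lemma expand2 {K : Type*} [CommRing K] [Nontrivial K] (q : Polynomial K) (hm : q.Monic)
    (hd : q.natDegree = 2) : q = Polynomial.X ^ 2 + Polynomial.C (q.coeff 1) * Polynomial.X + Polynomial.C (q.coeff 0) := by
  have h1 : q.coeff 2 = 1 := by rw [← hd]; exact hm.coeff_natDegree
  conv_lhs => rw [q.as_sum_range' 3 (by omega)]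
  simp only [Finset.sum_range_succ, Finset.sum_range_zero, ← Polynomial.C_mul_X_pow_eq_monomial, h1, Polynomial.C_1, one_mul, zero_add, pow_zero, mul_one, pow_one]
  ring

lemma expand3 {K : Type*} [CommRing K] [Nontrivial K] (q : Polynomial K) (hm : q.Monic)
    (hd : q.natDegree = 3) : q = Polynomial.X ^ 3 + Polynomial.C (q.coeff 2) * Polynomial.X ^ 2 + Polynomial.C (q.coeff 1) * Polynomial.X + Polynomial.C (q.coeff 0) := by
  have h1 : q.coeff 3 = 1 := by rw [← hd]; exact hm.coeff_natDegree
  conv_lhs => rw [q.as_sum_range' 4 (by omega)]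
  simp only [Finset.sum_range_succ, Finset.sum_range_zero, ← Polynomial.C_mul_X_pow_eq_monomial, h1, Polynomial.C_1, one_mul, zero_add, pow_zero, mul_one, pow_one]
  ring

lemma expand4 {K : Type*} [CommRing K] [Nontrivial K] (q : Polynomial K) (hm : q.Monic)
    (hd : q.natDegree = 4) : q = Polynomial.X ^ 4 + Polynomial.C (q.coeff 3) * Polynomial.X ^ 3 + Polynomial.C (q.coeff 2) * Polynomial.X ^ 2 + Polynomial.C (q.coeff 1) * Polynomial.X + Polynomial.C (q.coeff 0) := by
  have h1 : q.coeff 4 = 1 := by rw [← hd]; exact hm.coeff_natDegree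
  conv_lhs => rw [q.as_sum_range' 5 (by omega)]
  simp only [Finset.sum_range_succ, Finset.sum_range_zero, ← Polynomial.C_mul_X_pow_eq_monomial, h1, Polynomial.C_1, one_mul, zero_add, pow_zero, mul_one, pow_one]
  ring

lemma expand5 {K : Type*} [CommRing K] [Nontrivial K] (q : Polynomial K) (hm : q.Monic)
    (hd : q.natDegree = 5) : q = Polynomial.X ^ 5 + Polynomial.C (q.coeff 4) * Polynomial.X ^ 4 + Polynomial.C (q.coeff 3) * Polynomial.X ^ 3 + Polynomial.C (q.coeff 2) * Polynomial.X ^ 2 + Polynomial.C (q.coeff 1) * Polynomial.X + Polynomial.C (q.coeff 0) := by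
  have h1 : q.coeff 5 = 1 := by rw [← hd]; exact hm.coeff_natDegree
  conv_lhs => rw [q.as_sum_range' 6 (by omega)]
  simp only [Finset.sum_range_succ, Finset.sum_range_zero, ← Polynomial.C_mul_X_pow_eq_monomial, h1, Polynomial.C_1, one_mul, zero_add, pow_zero, mul_one, pow_one]
  ring

lemma cert1 (a0 : ZMod 5) :
    (Polynomial.X ^ 10 - 4 * Polynomial.X ^ 9 + 27 * Polynomial.X ^ 8 - 56 * Polynomial.X ^ 7 + 15 * Polynomial.X ^ 6 + 12 * Polynomial.X ^ 5 - 55 * Polynomial.X ^ 4 + 64 * Polynomial.X ^ 3 + 12 * Polynomial.X ^ 2 + 32 : Polynomial (ZMod 5)) = (Polynomial.X + Polynomial.C a0) * (Polynomial.C (1) * Polynomial.X ^ 9 + Polynomial.C ((-4) + (-1) * a0) * Polynomial.X ^ 8 + Polynomial.C (27 + 4 * a0 + a0 ^ 2) * Polynomial.X ^ 7 + Polynomial.C ((-56) + (-27) * a0 + (-4) * a0 ^ 2 + (-1) * a0 ^ 3) * Polynomial.X ^ 6 + Polynomial.C (15 + 56 * a0 + 27 * a0 ^ 2 + 4 * a0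 ^ 3 + a0 ^ 4) * Polynomial.X ^ 5 + Polynomial.C (12 + (-15) * a0 + (-56) * a0 ^ 2 + (-27) * a0 ^ 3 + (-4) * a0 ^ 4 + (-1) * a0 ^ 5) * Polynomial.X ^ 4 + Polynomial.C ((-55) + (-12) * a0 + 15 * a0 ^ 2 + 56 * a0 ^ 3 + 27 * a0 ^ 4 + 4 * a0 ^ 5 + a0 ^ 6) * Polynomial.X ^ 3 + Polynomial.C (64 + 55 * a0 + 12 * a0 ^ 2 + (-15) * a0 ^ 3 + (-56) * a0 ^ 4 + (-27) * a0 ^ 5 + (-4) * a0 ^ 6 + (-1) * a0 ^ 7) * Polynomial.X ^ 2 + Polynomial.C (12 + (-64) * a0 + (-55) * a0 ^ 2 + (-12) * a0 ^ 3 + 15 * a0 ^ 4 + 56 * a0 ^ 5 + 27 * a0 ^ 6 + 4 * a0 ^ 7 + a0 ^ 8) * Polynomial.X + Polynomial.C ((-12) * a0 + 64 * a0 ^ 2 + 55 * a0 ^ 3 + 12 * a0 ^ 4 + (-15) * a0 ^ 5 + (-56) * a0 ^ 6 + (-27) * a0 ^ 7 + (-4) * a0 ^ 8 + (-1) * a0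 ^ 9)) + (Polynomial.C (32 + 12 * a0 ^ 2 + (-64) * a0 ^ 3 + (-55) * a0 ^ 4 + (-12) * a0 ^ 5 + 15 * a0 ^ 6 + 56 * a0 ^ 7 + 27 * a0 ^ 8 + 4 * a0 ^ 9 + a0 ^ 10)) := by
  simp only [map_add, map_sub, map_mul, map_pow, map_neg, map_ofNat, map_one, map_zero]
  ring

lemma dec1 : ∀ (a0 : ZMod 5), ¬ ((32 + 12 * a0 ^ 2 + (-64) * a0 ^ 3 + (-55) * a0 ^ 4 + (-12) * a0 ^ 5 + 15 * a0 ^ 6 + 56 * a0 ^ 7 + 27 * a0 ^ 8 + 4 * a0 ^ 9 + a0 ^ 10 : ZMod 5) = 0) := by decide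

lemma nodiv1 (a0 : ZMod 5) :
    ¬ ((Polynomial.X + Polynomial.C a0 : Polynomial (ZMod 5)) ∣ (Polynomial.X ^ 10 - 4 * Polynomial.X ^ 9 + 27 * Polynomial.X ^ 8 - 56 * Polynomial.X ^ 7 + 15 * Polynomial.X ^ 6 + 12 * Polynomial.X ^ 5 - 55 * Polynomial.X ^ 4 + 64 * Polynomial.X ^ 3 + 12 * Polynomial.X ^ 2 + 32 : Polynomial (ZMod 5))) := by
  intro hdvd
  rw [cert1 a0] at hdvd
  have hrem := (dvd_add_right (dvd_mul_right _ _)).mp hdvd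
  have hz := Polynomial.eq_zero_of_dvd_of_degree_lt hrem (by
    have hdg : (Polynomial.X + Polynomial.C a0 : Polynomial (ZMod 5)).degree = 1 := by compute_degree!
    rw [hdg]
    exact lt_of_le_of_lt (by compute_degree) (by norm_num))
  exact dec1 a0 (coeffs1 _  hz)

lemma cert2 (a0 a1 : ZMod 13) :
    (Polynomial.X ^ 10 - 4 * Polynomial.X ^ 9 + 27 * Polynomial.X ^ 8 - 56 * Polynomial.X ^ 7 + 15 * Polynomial.X ^ 6 + 12 * Polynomial.X ^ 5 - 55 * Polynomial.X ^ 4 + 64 * Polynomial.X ^ 3 + 12 * Polynomial.X ^ 2 + 32 : Polynomial (ZMod 13)) = (Polynomial.X ^ 2 + Polynomial.C a1 * Polynomial.X + Polynomial.C a0) * (Polynomial.C (1) * Polynomial.X ^ 8 + Polynomial.C ((-4) + (-1) * a1) * Polynomial.X ^ 7 + Polynomial.C (27 + 4 * a1 + a1 ^ 2 + (-1) * a0) * Polynomial.X ^ 6 + Polynomial.C ((-56) + (-27) * a1 + (-4) * a1 ^ 2 + (-1) * a1 ^ 3 + 4 * a0 + 2 * a0 * a1) * Polynomial.X ^ 5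 + Polynomial.C (15 + 56 * a1 + 27 * a1 ^ 2 + 4 * a1 ^ 3 + a1 ^ 4 + (-27) * a0 + (-8) * a0 * a1 + (-3) * a0 * a1 ^ 2 + a0 ^ 2) * Polynomial.X ^ 4 + Polynomial.C (12 + (-15) * a1 + (-56) * a1 ^ 2 + (-27) * a1 ^ 3 + (-4) * a1 ^ 4 + (-1) * a1 ^ 5 + 56 * a0 + 54 * a0 * a1 + 12 * a0 * a1 ^ 2 + 4 * a0 * a1 ^ 3 + (-4) * a0 ^ 2 + (-3) * a0 ^ 2 * a1) * Polynomial.X ^ 3 + Polynomial.C ((-55) + (-12) * a1 + 15 * a1 ^ 2 + 56 * a1 ^ 3 + 27 * a1 ^ 4 + 4 * a1 ^ 5 + a1 ^ 6 + (-15) * a0 + (-112) * a0 * a1 + (-81) * a0 * a1 ^ 2 + (-16) * a0 * a1 ^ 3 + (-5) * a0 * a1 ^ 4 + 27 * a0 ^ 2 + 12 * a0 ^ 2 * a1 + 6 * a0 ^ 2 * a1 ^ 2 + (-1) * a0 ^ 3) * Polynomial.X ^ 2 + Polynomial.C (64 + 55 * a1 + 12 * a1 ^ 2 + (-15) * a1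 ^ 3 + (-56) * a1 ^ 4 + (-27) * a1 ^ 5 + (-4) * a1 ^ 6 + (-1) * a1 ^ 7 + (-12) * a0 + 30 * a0 * a1 + 168 * a0 * a1 ^ 2 + 108 * a0 * a1 ^ 3 + 20 * a0 * a1 ^ 4 + 6 * a0 * a1 ^ 5 + (-56) * a0 ^ 2 + (-81) * a0 ^ 2 * a1 + (-24) * a0 ^ 2 * a1 ^ 2 + (-10) * a0 ^ 2 * a1 ^ 3 + 4 * a0 ^ 3 + 4 * a0 ^ 3 * a1) * Polynomial.X + Polynomial.C (12 + (-64) * a1 + (-55) * a1 ^ 2 + (-12) * a1 ^ 3 + 15 * a1 ^ 4 + 56 * a1 ^ 5 + 27 * a1 ^ 6 + 4 * a1 ^ 7 + a1 ^ 8 + 55 * a0 + 24 * a0 * a1 + (-45) * a0 * a1 ^ 2 + (-224) * a0 * a1 ^ 3 + (-135) * a0 * a1 ^ 4 + (-24) * a0 * a1 ^ 5 + (-7) * a0 * a1 ^ 6 + 15 * a0 ^ 2 + 168 * a0 ^ 2 * a1 + 162 * a0 ^ 2 * a1 ^ 2 + 40 * a0 ^ 2 * a1 ^ 3 + 15 *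 a0 ^ 2 * a1 ^ 4 + (-27) * a0 ^ 3 + (-16) * a0 ^ 3 * a1 + (-10) * a0 ^ 3 * a1 ^ 2 + a0 ^ 4)) + (Polynomial.C (32 + (-12) * a0 + 64 * a0 * a1 + 55 * a0 * a1 ^ 2 + 12 * a0 * a1 ^ 3 + (-15) * a0 * a1 ^ 4 + (-56) * a0 * a1 ^ 5 + (-27) * a0 * a1 ^ 6 + (-4) * a0 * a1 ^ 7 + (-1) * a0 * a1 ^ 8 + (-55) * a0 ^ 2 + (-24) * a0 ^ 2 * a1 + 45 * a0 ^ 2 * a1 ^ 2 + 224 * a0 ^ 2 * a1 ^ 3 + 135 * a0 ^ 2 * a1 ^ 4 + 24 * a0 ^ 2 * a1 ^ 5 + 7 * a0 ^ 2 * a1 ^ 6 + (-15) * a0 ^ 3 + (-168) * a0 ^ 3 * a1 + (-162) * a0 ^ 3 * a1 ^ 2 + (-40) * a0 ^ 3 * a1 ^ 3 + (-15) * a0 ^ 3 * a1 ^ 4 + 27 * a0 ^ 4 + 16 * a0 ^ 4 * a1 + 10 * a0 ^ 4 * a1 ^ 2 + (-1) * a0 ^ 5) + Polynomial.C ((-12)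 * a1 + 64 * a1 ^ 2 + 55 * a1 ^ 3 + 12 * a1 ^ 4 + (-15) * a1 ^ 5 + (-56) * a1 ^ 6 + (-27) * a1 ^ 7 + (-4) * a1 ^ 8 + (-1) * a1 ^ 9 + (-64) * a0 + (-110) * a0 * a1 + (-36) * a0 * a1 ^ 2 + 60 * a0 * a1 ^ 3 + 280 * a0 * a1 ^ 4 + 162 * a0 * a1 ^ 5 + 28 * a0 * a1 ^ 6 + 8 * a0 * a1 ^ 7 + 12 * a0 ^ 2 + (-45) * a0 ^ 2 * a1 + (-336) * a0 ^ 2 * a1 ^ 2 + (-270) * a0 ^ 2 * a1 ^ 3 + (-60) * a0 ^ 2 * a1 ^ 4 + (-21) * a0 ^ 2 * a1 ^ 5 + 56 * a0 ^ 3 + 108 * a0 ^ 3 * a1 + 40 * a0 ^ 3 * a1 ^ 2 + 20 * a0 ^ 3 * a1 ^ 3 + (-4) * a0 ^ 4 + (-5) * a0 ^ 4 * a1) * Polynomial.X) := by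
  simp only [map_add, map_sub, map_mul, map_pow, map_neg, map_ofNat, map_one, map_zero]
  ring

lemma dec2 : ∀ (a0 a1 : ZMod 13), ¬ ((32 + (-12) * a0 + 64 * a0 * a1 + 55 * a0 * a1 ^ 2 + 12 * a0 * a1 ^ 3 + (-15) * a0 * a1 ^ 4 + (-56) * a0 * a1 ^ 5 + (-27) * a0 * a1 ^ 6 + (-4) * a0 * a1 ^ 7 + (-1) * a0 * a1 ^ 8 + (-55) * a0 ^ 2 + (-24) * a0 ^ 2 * a1 + 45 * a0 ^ 2 * a1 ^ 2 + 224 * a0 ^ 2 * a1 ^ 3 + 135 * a0 ^ 2 * a1 ^ 4 + 24 * a0 ^ 2 * a1 ^ 5 + 7 * a0 ^ 2 * a1 ^ 6 + (-15) * a0 ^ 3 + (-168) * a0 ^ 3 * a1 + (-162) * a0 ^ 3 * a1 ^ 2 + (-40) * a0 ^ 3 * a1 ^ 3 + (-15) * a0 ^ 3 * a1 ^ 4 + 27 * a0 ^ 4 + 16 * a0 ^ 4 * a1 + 10 * a0 ^ 4 * a1 ^ 2 + (-1) * a0 ^ 5 : ZMod 13) = 0 ∧ ((-12) * a1 + 64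 * a1 ^ 2 + 55 * a1 ^ 3 + 12 * a1 ^ 4 + (-15) * a1 ^ 5 + (-56) * a1 ^ 6 + (-27) * a1 ^ 7 + (-4) * a1 ^ 8 + (-1) * a1 ^ 9 + (-64) * a0 + (-110) * a0 * a1 + (-36) * a0 * a1 ^ 2 + 60 * a0 * a1 ^ 3 + 280 * a0 * a1 ^ 4 + 162 * a0 * a1 ^ 5 + 28 * a0 * a1 ^ 6 + 8 * a0 * a1 ^ 7 + 12 * a0 ^ 2 + (-45) * a0 ^ 2 * a1 + (-336) * a0 ^ 2 * a1 ^ 2 + (-270) * a0 ^ 2 * a1 ^ 3 + (-60) * a0 ^ 2 * a1 ^ 4 + (-21) * a0 ^ 2 * a1 ^ 5 + 56 * a0 ^ 3 + 108 * a0 ^ 3 * a1 + 40 * a0 ^ 3 * a1 ^ 2 + 20 * a0 ^ 3 * a1 ^ 3 + (-4) * a0 ^ 4 + (-5) * a0 ^ 4 * a1 : ZMod 13) = 0) := by decide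

lemma nodiv2 (a0 a1 : ZMod 13) :
    ¬ ((Polynomial.X ^ 2 + Polynomial.C a1 * Polynomial.X + Polynomial.C a0 : Polynomial (ZMod 13)) ∣ (Polynomial.X ^ 10 - 4 * Polynomial.X ^ 9 + 27 * Polynomial.X ^ 8 - 56 * Polynomial.X ^ 7 + 15 * Polynomial.X ^ 6 + 12 * Polynomial.X ^ 5 - 55 * Polynomial.X ^ 4 + 64 * Polynomial.X ^ 3 + 12 * Polynomial.X ^ 2 + 32 : Polynomial (ZMod 13))) := by
  intro hdvd
  rw [cert2 a0 a1] at hdvd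
  have hrem := (dvd_add_right (dvd_mul_right _ _)).mp hdvd
  have hz := Polynomial.eq_zero_of_dvd_of_degree_lt hrem (by
    have hdg : (Polynomial.X ^ 2 + Polynomial.C a1 * Polynomial.X + Polynomial.C a0 : Polynomial (ZMod 13)).degree = 2 := by compute_degree!
    rw [hdg]
    exact lt_of_le_of_lt (by compute_degree) (by norm_num))
  exact dec2 a0 a1 (coeffs2 _ _ hz)

lemma cert3 (a0 a1 a2 : ZMod 5) :
    (Polynomial.X ^ 10 - 4 * Polynomial.X ^ 9 + 27 * Polynomial.X ^ 8 - 56 * Polynomial.X ^ 7 + 15 * Polynomial.X ^ 6 + 12 * Polynomial.X ^ 5 - 55 * Polynomial.X ^ 4 + 64 * Polynomial.X ^ 3 + 12 * Polynomial.X ^ 2 + 32 : Polynomial (ZMod 5)) = (Polynomial.X ^ 3 + Polynomial.C a2 * Polynomial.X ^ 2 + Polynomial.C a1 * Polynomial.X + Polynomial.C a0) * (Polynomial.C (1) * Polynomial.X ^ 7 + Polynomial.C ((-4) + (-1) * a2) * Polynomial.X ^ 6 + Polynomial.C (27 + 4 * a2 + a2 ^ 2 + (-1) * a1) * Polynomial.X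 ^ 5 + Polynomial.C ((-56) + (-27) * a2 + (-4) * a2 ^ 2 + (-1) * a2 ^ 3 + 4 * a1 + 2 * a1 * a2 + (-1) * a0) * Polynomial.X ^ 4 + Polynomial.C (15 + 56 * a2 + 27 * a2 ^ 2 + 4 * a2 ^ 3 + a2 ^ 4 + (-27) * a1 + (-8) * a1 * a2 + (-3) * a1 * a2 ^ 2 + a1 ^ 2 + 4 * a0 + 2 * a0 * a2) * Polynomial.X ^ 3 + Polynomial.C (12 + (-15) * a2 + (-56) * a2 ^ 2 + (-27) * a2 ^ 3 + (-4) * a2 ^ 4 + (-1) * a2 ^ 5 + 56 * a1 + 54 * a1 * a2 + 12 * a1 * a2 ^ 2 + 4 * a1 * a2 ^ 3 + (-4) * a1 ^ 2 + (-3) * a1 ^ 2 * a2 + (-27) * a0 + (-8) * a0 * a2 + (-3) * a0 * a2 ^ 2 + 2 * a0 * a1) * Polynomial.X ^ 2 + Polynomial.C ((-55) + (-12) * a2 + 15 * a2 ^ 2 + 56 * a2 ^ 3 + 27 * a2 ^ 4 + 4 * a2 ^ 5 + a2 ^ 6 + (-15) * a1 + (-112) * a1 * a2 + (-81) * a1 *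 a2 ^ 2 + (-16) * a1 * a2 ^ 3 + (-5) * a1 * a2 ^ 4 + 27 * a1 ^ 2 + 12 * a1 ^ 2 * a2 + 6 * a1 ^ 2 * a2 ^ 2 + (-1) * a1 ^ 3 + 56 * a0 + 54 * a0 * a2 + 12 * a0 * a2 ^ 2 + 4 * a0 * a2 ^ 3 + (-8) * a0 * a1 + (-6) * a0 * a1 * a2 + a0 ^ 2) * Polynomial.X + Polynomial.C (64 + 55 * a2 + 12 * a2 ^ 2 + (-15) * a2 ^ 3 + (-56) * a2 ^ 4 + (-27) * a2 ^ 5 + (-4) * a2 ^ 6 + (-1) * a2 ^ 7 + (-12) * a1 + 30 * a1 * a2 + 168 * a1 * a2 ^ 2 + 108 * a1 * a2 ^ 3 + 20 * a1 * a2 ^ 4 + 6 * a1 * a2 ^ 5 + (-56) * a1 ^ 2 + (-81) * a1 ^ 2 * a2 + (-24) * a1 ^ 2 * a2 ^ 2 + (-10) * a1 ^ 2 * a2 ^ 3 + 4 * a1 ^ 3 + 4 * a1 ^ 3 * a2 + (-15) * a0 + (-112) * a0 * a2 + (-81) * a0 * a2 ^ 2 + (-16) * a0 * a2 ^ 3 +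 (-5) * a0 * a2 ^ 4 + 54 * a0 * a1 + 24 * a0 * a1 * a2 + 12 * a0 * a1 * a2 ^ 2 + (-3) * a0 * a1 ^ 2 + (-4) * a0 ^ 2 + (-3) * a0 ^ 2 * a2)) + (Polynomial.C (32 + (-64) * a0 + (-55) * a0 * a2 + (-12) * a0 * a2 ^ 2 + 15 * a0 * a2 ^ 3 + 56 * a0 * a2 ^ 4 + 27 * a0 * a2 ^ 5 + 4 * a0 * a2 ^ 6 + a0 * a2 ^ 7 + 12 * a0 * a1 + (-30) * a0 * a1 * a2 + (-168) * a0 * a1 * a2 ^ 2 + (-108) * a0 * a1 * a2 ^ 3 + (-20) * a0 * a1 * a2 ^ 4 + (-6) * a0 * a1 * a2 ^ 5 + 56 * a0 * a1 ^ 2 + 81 * a0 * a1 ^ 2 * a2 + 24 * a0 * a1 ^ 2 * a2 ^ 2 + 10 * a0 * a1 ^ 2 * a2 ^ 3 + (-4) * a0 * a1 ^ 3 + (-4) * a0 * a1 ^ 3 * a2 + 15 * a0 ^ 2 + 112 * a0 ^ 2 * a2 + 81 * a0 ^ 2 * a2 ^ 2 + 16 * a0 ^ 2 * a2 ^ 3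 + 5 * a0 ^ 2 * a2 ^ 4 + (-54) * a0 ^ 2 * a1 + (-24) * a0 ^ 2 * a1 * a2 + (-12) * a0 ^ 2 * a1 * a2 ^ 2 + 3 * a0 ^ 2 * a1 ^ 2 + 4 * a0 ^ 3 + 3 * a0 ^ 3 * a2) + Polynomial.C ((-64) * a1 + (-55) * a1 * a2 + (-12) * a1 * a2 ^ 2 + 15 * a1 * a2 ^ 3 + 56 * a1 * a2 ^ 4 + 27 * a1 * a2 ^ 5 + 4 * a1 * a2 ^ 6 + a1 * a2 ^ 7 + 12 * a1 ^ 2 + (-30) * a1 ^ 2 * a2 + (-168) * a1 ^ 2 * a2 ^ 2 + (-108) * a1 ^ 2 * a2 ^ 3 + (-20) * a1 ^ 2 * a2 ^ 4 + (-6) * a1 ^ 2 * a2 ^ 5 + 56 * a1 ^ 3 + 81 * a1 ^ 3 * a2 + 24 * a1 ^ 3 * a2 ^ 2 + 10 * a1 ^ 3 * a2 ^ 3 + (-4) * a1 ^ 4 + (-4) * a1 ^ 4 * a2 + 55 * a0 + 12 * a0 * a2 + (-15) * a0 * a2 ^ 2 + (-56) * a0 * a2 ^ 3 + (-27) * a0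 * a2 ^ 4 + (-4) * a0 * a2 ^ 5 + (-1) * a0 * a2 ^ 6 + 30 * a0 * a1 + 224 * a0 * a1 * a2 + 162 * a0 * a1 * a2 ^ 2 + 32 * a0 * a1 * a2 ^ 3 + 10 * a0 * a1 * a2 ^ 4 + (-81) * a0 * a1 ^ 2 + (-36) * a0 * a1 ^ 2 * a2 + (-18) * a0 * a1 ^ 2 * a2 ^ 2 + 4 * a0 * a1 ^ 3 + (-56) * a0 ^ 2 + (-54) * a0 ^ 2 * a2 + (-12) * a0 ^ 2 * a2 ^ 2 + (-4) * a0 ^ 2 * a2 ^ 3 + 12 * a0 ^ 2 * a1 + 9 * a0 ^ 2 * a1 * a2 + (-1) * a0 ^ 3) * Polynomial.X + Polynomial.C (12 + (-64) * a2 + (-55) * a2 ^ 2 + (-12) * a2 ^ 3 + 15 * a2 ^ 4 + 56 * a2 ^ 5 + 27 * a2 ^ 6 + 4 * a2 ^ 7 + a2 ^ 8 + 55 * a1 + 24 * a1 * a2 + (-45) * a1 * a2 ^ 2 + (-224) * a1 * a2 ^ 3 + (-135) * a1 * a2 ^ 4 + (-24) * a1 * a2 ^ 5 + (-7) * a1 *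 a2 ^ 6 + 15 * a1 ^ 2 + 168 * a1 ^ 2 * a2 + 162 * a1 ^ 2 * a2 ^ 2 + 40 * a1 ^ 2 * a2 ^ 3 + 15 * a1 ^ 2 * a2 ^ 4 + (-27) * a1 ^ 3 + (-16) * a1 ^ 3 * a2 + (-10) * a1 ^ 3 * a2 ^ 2 + a1 ^ 4 + (-12) * a0 + 30 * a0 * a2 + 168 * a0 * a2 ^ 2 + 108 * a0 * a2 ^ 3 + 20 * a0 * a2 ^ 4 + 6 * a0 * a2 ^ 5 + (-112) * a0 * a1 + (-162) * a0 * a1 * a2 + (-48) * a0 * a1 * a2 ^ 2 + (-20) * a0 * a1 * a2 ^ 3 + 12 * a0 * a1 ^ 2 + 12 * a0 * a1 ^ 2 * a2 + 27 * a0 ^ 2 + 12 * a0 ^ 2 * a2 + 6 * a0 ^ 2 * a2 ^ 2 + (-3) * a0 ^ 2 * a1) * Polynomial.X ^ 2) := by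
  simp only [map_add, map_sub, map_mul, map_pow, map_neg, map_ofNat, map_one, map_zero]
  ring

lemma dec3 : ∀ (a0 a1 a2 : ZMod 5), ¬ ((32 + (-64) * a0 + (-55) * a0 * a2 + (-12) * a0 * a2 ^ 2 + 15 * a0 * a2 ^ 3 + 56 * a0 * a2 ^ 4 + 27 * a0 * a2 ^ 5 + 4 * a0 * a2 ^ 6 + a0 * a2 ^ 7 + 12 * a0 * a1 + (-30) * a0 * a1 * a2 + (-168) * a0 * a1 * a2 ^ 2 + (-108) * a0 * a1 * a2 ^ 3 + (-20) * a0 * a1 * a2 ^ 4 + (-6) * a0 * a1 * a2 ^ 5 + 56 * a0 * a1 ^ 2 + 81 * a0 * a1 ^ 2 * a2 + 24 * a0 * a1 ^ 2 * a2 ^ 2 + 10 * a0 * a1 ^ 2 * a2 ^ 3 + (-4) * a0 * a1 ^ 3 + (-4) * a0 * a1 ^ 3 * a2 + 15 * a0 ^ 2 + 112 * a0 ^ 2 * a2 + 81 * a0 ^ 2 * a2 ^ 2 + 16 * a0 ^ 2 * a2 ^ 3 + 5 * a0 ^ 2 * a2 ^ 4 + (-54) * a0 ^ 2 * a1 + (-24)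 * a0 ^ 2 * a1 * a2 + (-12) * a0 ^ 2 * a1 * a2 ^ 2 + 3 * a0 ^ 2 * a1 ^ 2 + 4 * a0 ^ 3 + 3 * a0 ^ 3 * a2 : ZMod 5) = 0 ∧ ((-64) * a1 + (-55) * a1 * a2 + (-12) * a1 * a2 ^ 2 + 15 * a1 * a2 ^ 3 + 56 * a1 * a2 ^ 4 + 27 * a1 * a2 ^ 5 + 4 * a1 * a2 ^ 6 + a1 * a2 ^ 7 + 12 * a1 ^ 2 + (-30) * a1 ^ 2 * a2 + (-168) * a1 ^ 2 * a2 ^ 2 + (-108) * a1 ^ 2 * a2 ^ 3 + (-20) * a1 ^ 2 * a2 ^ 4 + (-6) * a1 ^ 2 * a2 ^ 5 + 56 * a1 ^ 3 + 81 * a1 ^ 3 * a2 + 24 * a1 ^ 3 * a2 ^ 2 + 10 * a1 ^ 3 * a2 ^ 3 + (-4) * a1 ^ 4 + (-4) * a1 ^ 4 * a2 + 55 * a0 + 12 * a0 * a2 + (-15) * a0 * a2 ^ 2 + (-56) * a0 * a2 ^ 3 + (-27) * a0 * a2 ^ 4 + (-4) * a0 * a2 ^ 5 + (-1) * a0 *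 a2 ^ 6 + 30 * a0 * a1 + 224 * a0 * a1 * a2 + 162 * a0 * a1 * a2 ^ 2 + 32 * a0 * a1 * a2 ^ 3 + 10 * a0 * a1 * a2 ^ 4 + (-81) * a0 * a1 ^ 2 + (-36) * a0 * a1 ^ 2 * a2 + (-18) * a0 * a1 ^ 2 * a2 ^ 2 + 4 * a0 * a1 ^ 3 + (-56) * a0 ^ 2 + (-54) * a0 ^ 2 * a2 + (-12) * a0 ^ 2 * a2 ^ 2 + (-4) * a0 ^ 2 * a2 ^ 3 + 12 * a0 ^ 2 * a1 + 9 * a0 ^ 2 * a1 * a2 + (-1) * a0 ^ 3 : ZMod 5) = 0 ∧ (12 + (-64) * a2 + (-55) * a2 ^ 2 + (-12) * a2 ^ 3 + 15 * a2 ^ 4 + 56 * a2 ^ 5 + 27 * a2 ^ 6 + 4 * a2 ^ 7 + a2 ^ 8 + 55 * a1 + 24 * a1 * a2 + (-45) * a1 * a2 ^ 2 + (-224) * a1 * a2 ^ 3 + (-135) * a1 * a2 ^ 4 + (-24) * a1 * a2 ^ 5 + (-7) * a1 * a2 ^ 6 + 15 * a1 ^ 2 + 168 * a1 ^ 2 *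 a2 + 162 * a1 ^ 2 * a2 ^ 2 + 40 * a1 ^ 2 * a2 ^ 3 + 15 * a1 ^ 2 * a2 ^ 4 + (-27) * a1 ^ 3 + (-16) * a1 ^ 3 * a2 + (-10) * a1 ^ 3 * a2 ^ 2 + a1 ^ 4 + (-12) * a0 + 30 * a0 * a2 + 168 * a0 * a2 ^ 2 + 108 * a0 * a2 ^ 3 + 20 * a0 * a2 ^ 4 + 6 * a0 * a2 ^ 5 + (-112) * a0 * a1 + (-162) * a0 * a1 * a2 + (-48) * a0 * a1 * a2 ^ 2 + (-20) * a0 * a1 * a2 ^ 3 + 12 * a0 * a1 ^ 2 + 12 * a0 * a1 ^ 2 * a2 + 27 * a0 ^ 2 + 12 * a0 ^ 2 * a2 + 6 * a0 ^ 2 * a2 ^ 2 + (-3) * a0 ^ 2 * a1 : ZMod 5) = 0) := by decide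

lemma nodiv3 (a0 a1 a2 : ZMod 5) :
    ¬ ((Polynomial.X ^ 3 + Polynomial.C a2 * Polynomial.X ^ 2 + Polynomial.C a1 * Polynomial.X + Polynomial.C a0 : Polynomial (ZMod 5)) ∣ (Polynomial.X ^ 10 - 4 * Polynomial.X ^ 9 + 27 * Polynomial.X ^ 8 - 56 * Polynomial.X ^ 7 + 15 * Polynomial.X ^ 6 + 12 * Polynomial.X ^ 5 - 55 * Polynomial.X ^ 4 + 64 * Polynomial.X ^ 3 + 12 * Polynomial.X ^ 2 + 32 : Polynomial (ZMod 5))) := by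
  intro hdvd
  rw [cert3 a0 a1 a2] at hdvd
  have hrem := (dvd_add_right (dvd_mul_right _ _)).mp hdvd
  have hz := Polynomial.eq_zero_of_dvd_of_degree_lt hrem (by
    have hdg : (Polynomial.X ^ 3 + Polynomial.C a2 * Polynomial.X ^ 2 + Polynomial.C a1 * Polynomial.X + Polynomial.C a0 : Polynomial (ZMod 5)).degree = 3 := by compute_degree!
    rw [hdg]
    exact lt_of_le_of_lt (by compute_degree) (by norm_num))
  exact dec3 a0 a1 a2 (coeffs3 _ _ _ hz)

lemma cert4 (a0 a1 a2 a3 : ZMod 5) :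
    (Polynomial.X ^ 10 - 4 * Polynomial.X ^ 9 + 27 * Polynomial.X ^ 8 - 56 * Polynomial.X ^ 7 + 15 * Polynomial.X ^ 6 + 12 * Polynomial.X ^ 5 - 55 * Polynomial.X ^ 4 + 64 * Polynomial.X ^ 3 + 12 * Polynomial.X ^ 2 + 32 : Polynomial (ZMod 5)) = (Polynomial.X ^ 4 + Polynomial.C a3 * Polynomial.X ^ 3 + Polynomial.C a2 * Polynomial.X ^ 2 + Polynomial.C a1 * Polynomial.X + Polynomial.C a0) * (Polynomial.C (1) * Polynomial.X ^ 6 + Polynomial.C ((-4) + (-1) * a3) * Polynomial.X ^ 5 + Polynomial.C (27 + 4 * a3 + a3 ^ 2 + (-1) * a2) * Polynomial.X ^ 4 + Polynomial.C ((-56) + (-27) * a3 + (-4) * a3 ^ 2 + (-1) * a3 ^ 3 + 4 * a2 + 2 * a2 * a3 + (-1) * a1) * Polynomial.X ^ 3 + Polynomial.C (15 + 56 * a3 + 27 * a3 ^ 2 + 4 * a3 ^ 3 + a3 ^ 4 + (-27) * a2 + (-8) * a2 * a3 + (-3) * a2 * a3 ^ 2 + a2 ^ 2 + 4 * a1 +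 2 * a1 * a3 + (-1) * a0) * Polynomial.X ^ 2 + Polynomial.C (12 + (-15) * a3 + (-56) * a3 ^ 2 + (-27) * a3 ^ 3 + (-4) * a3 ^ 4 + (-1) * a3 ^ 5 + 56 * a2 + 54 * a2 * a3 + 12 * a2 * a3 ^ 2 + 4 * a2 * a3 ^ 3 + (-4) * a2 ^ 2 + (-3) * a2 ^ 2 * a3 + (-27) * a1 + (-8) * a1 * a3 + (-3) * a1 * a3 ^ 2 + 2 * a1 * a2 + 4 * a0 + 2 * a0 * a3) * Polynomial.X + Polynomial.C ((-55) + (-12) * a3 + 15 * a3 ^ 2 + 56 * a3 ^ 3 + 27 * a3 ^ 4 + 4 * a3 ^ 5 + a3 ^ 6 + (-15) * a2 + (-112) * a2 * a3 + (-81) * a2 * a3 ^ 2 + (-16) * a2 * a3 ^ 3 + (-5) * a2 * a3 ^ 4 + 27 * a2 ^ 2 + 12 * a2 ^ 2 * a3 + 6 * a2 ^ 2 * a3 ^ 2 + (-1) * a2 ^ 3 + 56 * a1 + 54 * a1 * a3 + 12 * a1 * a3 ^ 2 + 4 * a1 * a3 ^ 3 + (-8) * a1 * a2 + (-6) * a1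 * a2 * a3 + a1 ^ 2 + (-27) * a0 + (-8) * a0 * a3 + (-3) * a0 * a3 ^ 2 + 2 * a0 * a2)) + (Polynomial.C (32 + 55 * a0 + 12 * a0 * a3 + (-15) * a0 * a3 ^ 2 + (-56) * a0 * a3 ^ 3 + (-27) * a0 * a3 ^ 4 + (-4) * a0 * a3 ^ 5 + (-1) * a0 * a3 ^ 6 + 15 * a0 * a2 + 112 * a0 * a2 * a3 + 81 * a0 * a2 * a3 ^ 2 + 16 * a0 * a2 * a3 ^ 3 + 5 * a0 * a2 * a3 ^ 4 + (-27) * a0 * a2 ^ 2 + (-12) * a0 * a2 ^ 2 * a3 + (-6) * a0 * a2 ^ 2 * a3 ^ 2 + a0 * a2 ^ 3 + (-56) * a0 * a1 + (-54) * a0 * a1 * a3 + (-12) * a0 * a1 * a3 ^ 2 + (-4) * a0 * a1 * a3 ^ 3 + 8 * a0 * a1 * a2 + 6 * a0 * a1 * a2 * a3 + (-1) * a0 * a1 ^ 2 + 27 * a0 ^ 2 + 8 * a0 ^ 2 * a3 + 3 * a0 ^ 2 * a3 ^ 2 + (-2) * a0 ^ 2 * a2) + Polynomial.C (55 * a1 +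 12 * a1 * a3 + (-15) * a1 * a3 ^ 2 + (-56) * a1 * a3 ^ 3 + (-27) * a1 * a3 ^ 4 + (-4) * a1 * a3 ^ 5 + (-1) * a1 * a3 ^ 6 + 15 * a1 * a2 + 112 * a1 * a2 * a3 + 81 * a1 * a2 * a3 ^ 2 + 16 * a1 * a2 * a3 ^ 3 + 5 * a1 * a2 * a3 ^ 4 + (-27) * a1 * a2 ^ 2 + (-12) * a1 * a2 ^ 2 * a3 + (-6) * a1 * a2 ^ 2 * a3 ^ 2 + a1 * a2 ^ 3 + (-56) * a1 ^ 2 + (-54) * a1 ^ 2 * a3 + (-12) * a1 ^ 2 * a3 ^ 2 + (-4) * a1 ^ 2 * a3 ^ 3 + 8 * a1 ^ 2 * a2 + 6 * a1 ^ 2 * a2 * a3 + (-1) * a1 ^ 3 + (-12) * a0 + 15 * a0 * a3 + 56 * a0 * a3 ^ 2 + 27 * a0 * a3 ^ 3 + 4 * a0 * a3 ^ 4 + a0 * a3 ^ 5 + (-56) * a0 * a2 + (-54) * a0 * a2 * a3 + (-12) * a0 * a2 * a3 ^ 2 + (-4) * a0 * a2 * a3 ^ 3 + 4 * a0 * a2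 ^ 2 + 3 * a0 * a2 ^ 2 * a3 + 54 * a0 * a1 + 16 * a0 * a1 * a3 + 6 * a0 * a1 * a3 ^ 2 + (-4) * a0 * a1 * a2 + (-4) * a0 ^ 2 + (-2) * a0 ^ 2 * a3) * Polynomial.X + Polynomial.C (12 + 55 * a2 + 12 * a2 * a3 + (-15) * a2 * a3 ^ 2 + (-56) * a2 * a3 ^ 3 + (-27) * a2 * a3 ^ 4 + (-4) * a2 * a3 ^ 5 + (-1) * a2 * a3 ^ 6 + 15 * a2 ^ 2 + 112 * a2 ^ 2 * a3 + 81 * a2 ^ 2 * a3 ^ 2 + 16 * a2 ^ 2 * a3 ^ 3 + 5 * a2 ^ 2 * a3 ^ 4 + (-27) * a2 ^ 3 + (-12) * a2 ^ 3 * a3 + (-6) * a2 ^ 3 * a3 ^ 2 + a2 ^ 4 + (-12) * a1 + 15 * a1 * a3 + 56 * a1 * a3 ^ 2 + 27 * a1 * a3 ^ 3 + 4 * a1 * a3 ^ 4 + a1 * a3 ^ 5 + (-112) * a1 * a2 + (-108) * a1 * a2 * a3 + (-24) * a1 * a2 * a3 ^ 2 + (-8) * a1 * a2 * a3 ^ 3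 + 12 * a1 * a2 ^ 2 + 9 * a1 * a2 ^ 2 * a3 + 27 * a1 ^ 2 + 8 * a1 ^ 2 * a3 + 3 * a1 ^ 2 * a3 ^ 2 + (-3) * a1 ^ 2 * a2 + (-15) * a0 + (-56) * a0 * a3 + (-27) * a0 * a3 ^ 2 + (-4) * a0 * a3 ^ 3 + (-1) * a0 * a3 ^ 4 + 54 * a0 * a2 + 16 * a0 * a2 * a3 + 6 * a0 * a2 * a3 ^ 2 + (-3) * a0 * a2 ^ 2 + (-8) * a0 * a1 + (-4) * a0 * a1 * a3 + a0 ^ 2) * Polynomial.X ^ 2 + Polynomial.C (64 + 55 * a3 + 12 * a3 ^ 2 + (-15) * a3 ^ 3 + (-56) * a3 ^ 4 + (-27) * a3 ^ 5 + (-4) * a3 ^ 6 + (-1) * a3 ^ 7 + (-12) * a2 + 30 * a2 * a3 + 168 * a2 * a3 ^ 2 + 108 * a2 * a3 ^ 3 + 20 * a2 * a3 ^ 4 + 6 * a2 * a3 ^ 5 + (-56) * a2 ^ 2 + (-81) * a2 ^ 2 * a3 + (-24) * a2 ^ 2 * a3 ^ 2 + (-10) * a2 ^ 2 * a3 ^ 3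 + 4 * a2 ^ 3 + 4 * a2 ^ 3 * a3 + (-15) * a1 + (-112) * a1 * a3 + (-81) * a1 * a3 ^ 2 + (-16) * a1 * a3 ^ 3 + (-5) * a1 * a3 ^ 4 + 54 * a1 * a2 + 24 * a1 * a2 * a3 + 12 * a1 * a2 * a3 ^ 2 + (-3) * a1 * a2 ^ 2 + (-4) * a1 ^ 2 + (-3) * a1 ^ 2 * a3 + 56 * a0 + 54 * a0 * a3 + 12 * a0 * a3 ^ 2 + 4 * a0 * a3 ^ 3 + (-8) * a0 * a2 + (-6) * a0 * a2 * a3 + 2 * a0 * a1) * Polynomial.X ^ 3) := by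
  simp only [map_add, map_sub, map_mul, map_pow, map_neg, map_ofNat, map_one, map_zero]
  ring

lemma dec4 : ∀ (a0 a1 a2 a3 : ZMod 5), ¬ ((32 + 55 * a0 + 12 * a0 * a3 + (-15) * a0 * a3 ^ 2 + (-56) * a0 * a3 ^ 3 + (-27) * a0 * a3 ^ 4 + (-4) * a0 * a3 ^ 5 + (-1) * a0 * a3 ^ 6 + 15 * a0 * a2 + 112 * a0 * a2 * a3 + 81 * a0 * a2 * a3 ^ 2 + 16 * a0 * a2 * a3 ^ 3 + 5 * a0 * a2 * a3 ^ 4 + (-27) * a0 * a2 ^ 2 + (-12) * a0 * a2 ^ 2 * a3 + (-6) * a0 * a2 ^ 2 * a3 ^ 2 + a0 * a2 ^ 3 + (-56) * a0 * a1 + (-54) * a0 * a1 * a3 + (-12) * a0 * a1 * a3 ^ 2 + (-4) * a0 * a1 * a3 ^ 3 + 8 * a0 * a1 * a2 + 6 * a0 * a1 * a2 * a3 + (-1) * a0 * a1 ^ 2 + 27 * a0 ^ 2 + 8 * a0 ^ 2 * a3 + 3 * a0 ^ 2 * a3 ^ 2 + (-2) * a0 ^ 2 * a2 : ZMod 5)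 = 0 ∧ (55 * a1 + 12 * a1 * a3 + (-15) * a1 * a3 ^ 2 + (-56) * a1 * a3 ^ 3 + (-27) * a1 * a3 ^ 4 + (-4) * a1 * a3 ^ 5 + (-1) * a1 * a3 ^ 6 + 15 * a1 * a2 + 112 * a1 * a2 * a3 + 81 * a1 * a2 * a3 ^ 2 + 16 * a1 * a2 * a3 ^ 3 + 5 * a1 * a2 * a3 ^ 4 + (-27) * a1 * a2 ^ 2 + (-12) * a1 * a2 ^ 2 * a3 + (-6) * a1 * a2 ^ 2 * a3 ^ 2 + a1 * a2 ^ 3 + (-56) * a1 ^ 2 + (-54) * a1 ^ 2 * a3 + (-12) * a1 ^ 2 * a3 ^ 2 + (-4) * a1 ^ 2 * a3 ^ 3 + 8 * a1 ^ 2 * a2 + 6 * a1 ^ 2 * a2 * a3 + (-1) * a1 ^ 3 + (-12) * a0 + 15 * a0 * a3 + 56 * a0 * a3 ^ 2 + 27 * a0 * a3 ^ 3 + 4 * a0 * a3 ^ 4 + a0 * a3 ^ 5 + (-56) * a0 * a2 + (-54) * a0 * a2 * a3 + (-12) * a0 * a2 * a3 ^ 2 + (-4) * a0 * a2 * a3 ^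 3 + 4 * a0 * a2 ^ 2 + 3 * a0 * a2 ^ 2 * a3 + 54 * a0 * a1 + 16 * a0 * a1 * a3 + 6 * a0 * a1 * a3 ^ 2 + (-4) * a0 * a1 * a2 + (-4) * a0 ^ 2 + (-2) * a0 ^ 2 * a3 : ZMod 5) = 0 ∧ (12 + 55 * a2 + 12 * a2 * a3 + (-15) * a2 * a3 ^ 2 + (-56) * a2 * a3 ^ 3 + (-27) * a2 * a3 ^ 4 + (-4) * a2 * a3 ^ 5 + (-1) * a2 * a3 ^ 6 + 15 * a2 ^ 2 + 112 * a2 ^ 2 * a3 + 81 * a2 ^ 2 * a3 ^ 2 + 16 * a2 ^ 2 * a3 ^ 3 + 5 * a2 ^ 2 * a3 ^ 4 + (-27) * a2 ^ 3 + (-12) * a2 ^ 3 * a3 + (-6) * a2 ^ 3 * a3 ^ 2 + a2 ^ 4 + (-12) * a1 + 15 * a1 * a3 + 56 * a1 * a3 ^ 2 + 27 * a1 * a3 ^ 3 + 4 * a1 * a3 ^ 4 + a1 * a3 ^ 5 + (-112) * a1 * a2 + (-108) * a1 * a2 * a3 + (-24) * a1 * a2 * a3 ^ 2 + (-8) * a1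 * a2 * a3 ^ 3 + 12 * a1 * a2 ^ 2 + 9 * a1 * a2 ^ 2 * a3 + 27 * a1 ^ 2 + 8 * a1 ^ 2 * a3 + 3 * a1 ^ 2 * a3 ^ 2 + (-3) * a1 ^ 2 * a2 + (-15) * a0 + (-56) * a0 * a3 + (-27) * a0 * a3 ^ 2 + (-4) * a0 * a3 ^ 3 + (-1) * a0 * a3 ^ 4 + 54 * a0 * a2 + 16 * a0 * a2 * a3 + 6 * a0 * a2 * a3 ^ 2 + (-3) * a0 * a2 ^ 2 + (-8) * a0 * a1 + (-4) * a0 * a1 * a3 + a0 ^ 2 : ZMod 5) = 0 ∧ (64 + 55 * a3 + 12 * a3 ^ 2 + (-15) * a3 ^ 3 + (-56) * a3 ^ 4 + (-27) * a3 ^ 5 + (-4) * a3 ^ 6 + (-1) * a3 ^ 7 + (-12) * a2 + 30 * a2 * a3 + 168 * a2 * a3 ^ 2 + 108 * a2 * a3 ^ 3 + 20 * a2 * a3 ^ 4 + 6 * a2 * a3 ^ 5 + (-56) * a2 ^ 2 + (-81) * a2 ^ 2 * a3 + (-24) * a2 ^ 2 * a3 ^ 2 + (-10) * a2 ^ 2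 * a3 ^ 3 + 4 * a2 ^ 3 + 4 * a2 ^ 3 * a3 + (-15) * a1 + (-112) * a1 * a3 + (-81) * a1 * a3 ^ 2 + (-16) * a1 * a3 ^ 3 + (-5) * a1 * a3 ^ 4 + 54 * a1 * a2 + 24 * a1 * a2 * a3 + 12 * a1 * a2 * a3 ^ 2 + (-3) * a1 * a2 ^ 2 + (-4) * a1 ^ 2 + (-3) * a1 ^ 2 * a3 + 56 * a0 + 54 * a0 * a3 + 12 * a0 * a3 ^ 2 + 4 * a0 * a3 ^ 3 + (-8) * a0 * a2 + (-6) * a0 * a2 * a3 + 2 * a0 * a1 : ZMod 5) = 0) := by decide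

lemma nodiv4 (a0 a1 a2 a3 : ZMod 5) :
    ¬ ((Polynomial.X ^ 4 + Polynomial.C a3 * Polynomial.X ^ 3 + Polynomial.C a2 * Polynomial.X ^ 2 + Polynomial.C a1 * Polynomial.X + Polynomial.C a0 : Polynomial (ZMod 5)) ∣ (Polynomial.X ^ 10 - 4 * Polynomial.X ^ 9 + 27 * Polynomial.X ^ 8 - 56 * Polynomial.X ^ 7 + 15 * Polynomial.X ^ 6 + 12 * Polynomial.X ^ 5 - 55 * Polynomial.X ^ 4 + 64 * Polynomial.X ^ 3 + 12 * Polynomial.X ^ 2 + 32 : Polynomial (ZMod 5))) := by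
  intro hdvd
  rw [cert4 a0 a1 a2 a3] at hdvd
  have hrem := (dvd_add_right (dvd_mul_right _ _)).mp hdvd
  have hz := Polynomial.eq_zero_of_dvd_of_degree_lt hrem (by
    have hdg : (Polynomial.X ^ 4 + Polynomial.C a3 * Polynomial.X ^ 3 + Polynomial.C a2 * Polynomial.X ^ 2 + Polynomial.C a1 * Polynomial.X + Polynomial.C a0 : Polynomial (ZMod 5)).degree = 4 := by compute_degree!
    rw [hdg]
    exact lt_of_le_of_lt (by compute_degree) (by norm_num))
  exact dec4 a0 a1 a2 a3 (coeffs4 _ _ _ _ hz)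

lemma cert5 (a0 a1 a2 a3 a4 : ZMod 5) :
    (Polynomial.X ^ 10 - 4 * Polynomial.X ^ 9 + 27 * Polynomial.X ^ 8 - 56 * Polynomial.X ^ 7 + 15 * Polynomial.X ^ 6 + 12 * Polynomial.X ^ 5 - 55 * Polynomial.X ^ 4 + 64 * Polynomial.X ^ 3 + 12 * Polynomial.X ^ 2 + 32 : Polynomial (ZMod 5)) = (Polynomial.X ^ 5 + Polynomial.C a4 * Polynomial.X ^ 4 + Polynomial.C a3 * Polynomial.X ^ 3 + Polynomial.C a2 * Polynomial.X ^ 2 + Polynomial.C a1 * Polynomial.X + Polynomial.C a0) * (Polynomial.C (1) * Polynomial.X ^ 5 + Polynomial.C ((-4) + (-1) * a4) * Polynomial.X ^ 4 + Polynomial.C (27 + 4 * a4 + a4 ^ 2 + (-1) * a3) * Polynomial.X ^ 3 + Polynomial.C ((-56) + (-27) * a4 + (-4) * a4 ^ 2 + (-1) * a4 ^ 3 + 4 * a3 + 2 * a3 * a4 + (-1) * a2) * Polynomial.X ^ 2 + Polynomial.C (15 + 56 * a4 + 27 * a4 ^ 2 + 4 * a4 ^ 3 + a4 ^ 4 + (-27)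 * a3 + (-8) * a3 * a4 + (-3) * a3 * a4 ^ 2 + a3 ^ 2 + 4 * a2 + 2 * a2 * a4 + (-1) * a1) * Polynomial.X + Polynomial.C (12 + (-15) * a4 + (-56) * a4 ^ 2 + (-27) * a4 ^ 3 + (-4) * a4 ^ 4 + (-1) * a4 ^ 5 + 56 * a3 + 54 * a3 * a4 + 12 * a3 * a4 ^ 2 + 4 * a3 * a4 ^ 3 + (-4) * a3 ^ 2 + (-3) * a3 ^ 2 * a4 + (-27) * a2 + (-8) * a2 * a4 + (-3) * a2 * a4 ^ 2 + 2 * a2 * a3 + 4 * a1 + 2 * a1 * a4 + (-1) * a0)) + (Polynomial.C (32 + (-12) * a0 + 15 * a0 * a4 + 56 * a0 * a4 ^ 2 + 27 * a0 * a4 ^ 3 + 4 * a0 * a4 ^ 4 + a0 * a4 ^ 5 + (-56) * a0 * a3 + (-54) * a0 * a3 * a4 + (-12) * a0 * a3 * a4 ^ 2 + (-4) * a0 * a3 * a4 ^ 3 + 4 * a0 * a3 ^ 2 + 3 * a0 * a3 ^ 2 * a4 + 27 * a0 * a2 + 8 * a0 * a2 * a4 + 3 * a0 * a2 * a4 ^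 2 + (-2) * a0 * a2 * a3 + (-4) * a0 * a1 + (-2) * a0 * a1 * a4 + a0 ^ 2) + Polynomial.C ((-12) * a1 + 15 * a1 * a4 + 56 * a1 * a4 ^ 2 + 27 * a1 * a4 ^ 3 + 4 * a1 * a4 ^ 4 + a1 * a4 ^ 5 + (-56) * a1 * a3 + (-54) * a1 * a3 * a4 + (-12) * a1 * a3 * a4 ^ 2 + (-4) * a1 * a3 * a4 ^ 3 + 4 * a1 * a3 ^ 2 + 3 * a1 * a3 ^ 2 * a4 + 27 * a1 * a2 + 8 * a1 * a2 * a4 + 3 * a1 * a2 * a4 ^ 2 + (-2) * a1 * a2 * a3 + (-4) * a1 ^ 2 + (-2) * a1 ^ 2 * a4 + (-15) * a0 + (-56) * a0 * a4 + (-27) * a0 * a4 ^ 2 + (-4) * a0 * a4 ^ 3 + (-1) * a0 * a4 ^ 4 + 27 * a0 * a3 + 8 * a0 * a3 * a4 + 3 * a0 * a3 * a4 ^ 2 + (-1) * a0 * a3 ^ 2 + (-4) * a0 * a2 + (-2) * a0 * a2 * a4 + 2 * a0 * a1) * Polynomial.X + Polynomial.C (12 + (-12) * a2 + 15 * a2 *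 a4 + 56 * a2 * a4 ^ 2 + 27 * a2 * a4 ^ 3 + 4 * a2 * a4 ^ 4 + a2 * a4 ^ 5 + (-56) * a2 * a3 + (-54) * a2 * a3 * a4 + (-12) * a2 * a3 * a4 ^ 2 + (-4) * a2 * a3 * a4 ^ 3 + 4 * a2 * a3 ^ 2 + 3 * a2 * a3 ^ 2 * a4 + 27 * a2 ^ 2 + 8 * a2 ^ 2 * a4 + 3 * a2 ^ 2 * a4 ^ 2 + (-2) * a2 ^ 2 * a3 + (-15) * a1 + (-56) * a1 * a4 + (-27) * a1 * a4 ^ 2 + (-4) * a1 * a4 ^ 3 + (-1) * a1 * a4 ^ 4 + 27 * a1 * a3 + 8 * a1 * a3 * a4 + 3 * a1 * a3 * a4 ^ 2 + (-1) * a1 * a3 ^ 2 + (-8) * a1 * a2 + (-4) * a1 * a2 * a4 + a1 ^ 2 + 56 * a0 + 27 * a0 * a4 + 4 * a0 * a4 ^ 2 + a0 * a4 ^ 3 + (-4) * a0 * a3 + (-2) * a0 * a3 * a4 + 2 * a0 * a2) * Polynomial.X ^ 2 + Polynomial.C (64 + (-12) * a3 + 15 * a3 * a4 + 56 * a3 *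 a4 ^ 2 + 27 * a3 * a4 ^ 3 + 4 * a3 * a4 ^ 4 + a3 * a4 ^ 5 + (-56) * a3 ^ 2 + (-54) * a3 ^ 2 * a4 + (-12) * a3 ^ 2 * a4 ^ 2 + (-4) * a3 ^ 2 * a4 ^ 3 + 4 * a3 ^ 3 + 3 * a3 ^ 3 * a4 + (-15) * a2 + (-56) * a2 * a4 + (-27) * a2 * a4 ^ 2 + (-4) * a2 * a4 ^ 3 + (-1) * a2 * a4 ^ 4 + 54 * a2 * a3 + 16 * a2 * a3 * a4 + 6 * a2 * a3 * a4 ^ 2 + (-3) * a2 * a3 ^ 2 + (-4) * a2 ^ 2 + (-2) * a2 ^ 2 * a4 + 56 * a1 + 27 * a1 * a4 + 4 * a1 * a4 ^ 2 + a1 * a4 ^ 3 + (-8) * a1 * a3 + (-4) * a1 * a3 * a4 + 2 * a1 * a2 + (-27) * a0 + (-4) * a0 * a4 + (-1) * a0 * a4 ^ 2 + 2 * a0 * a3) * Polynomial.X ^ 3 + Polynomial.C ((-55) + (-12) * a4 + 15 * a4 ^ 2 + 56 * a4 ^ 3 + 27 * a4 ^ 4 + 4 * a4 ^ 5 + a4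 ^ 6 + (-15) * a3 + (-112) * a3 * a4 + (-81) * a3 * a4 ^ 2 + (-16) * a3 * a4 ^ 3 + (-5) * a3 * a4 ^ 4 + 27 * a3 ^ 2 + 12 * a3 ^ 2 * a4 + 6 * a3 ^ 2 * a4 ^ 2 + (-1) * a3 ^ 3 + 56 * a2 + 54 * a2 * a4 + 12 * a2 * a4 ^ 2 + 4 * a2 * a4 ^ 3 + (-8) * a2 * a3 + (-6) * a2 * a3 * a4 + a2 ^ 2 + (-27) * a1 + (-8) * a1 * a4 + (-3) * a1 * a4 ^ 2 + 2 * a1 * a3 + 4 * a0 + 2 * a0 * a4) * Polynomial.X ^ 4) := by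
  simp only [map_add, map_sub, map_mul, map_pow, map_neg, map_ofNat, map_one, map_zero]
  ring

lemma dec5 : ∀ (a0 a1 a2 a3 a4 : ZMod 5), ¬ ((32 + (-12) * a0 + 15 * a0 * a4 + 56 * a0 * a4 ^ 2 + 27 * a0 * a4 ^ 3 + 4 * a0 * a4 ^ 4 + a0 * a4 ^ 5 + (-56) * a0 * a3 + (-54) * a0 * a3 * a4 + (-12) * a0 * a3 * a4 ^ 2 + (-4) * a0 * a3 * a4 ^ 3 + 4 * a0 * a3 ^ 2 + 3 * a0 * a3 ^ 2 * a4 + 27 * a0 * a2 + 8 * a0 * a2 * a4 + 3 * a0 * a2 * a4 ^ 2 + (-2) * a0 * a2 * a3 + (-4) * a0 * a1 + (-2) * a0 * a1 * a4 + a0 ^ 2 : ZMod 5) = 0 ∧ ((-12) * a1 + 15 * a1 * a4 + 56 * a1 * a4 ^ 2 + 27 * a1 * a4 ^ 3 + 4 * a1 * a4 ^ 4 + a1 * a4 ^ 5 + (-56) * a1 * a3 + (-54) * a1 * a3 * a4 + (-12) * a1 * a3 * a4 ^ 2 + (-4) * a1 * a3 * a4 ^ 3 + 4 * a1 * a3 ^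 2 + 3 * a1 * a3 ^ 2 * a4 + 27 * a1 * a2 + 8 * a1 * a2 * a4 + 3 * a1 * a2 * a4 ^ 2 + (-2) * a1 * a2 * a3 + (-4) * a1 ^ 2 + (-2) * a1 ^ 2 * a4 + (-15) * a0 + (-56) * a0 * a4 + (-27) * a0 * a4 ^ 2 + (-4) * a0 * a4 ^ 3 + (-1) * a0 * a4 ^ 4 + 27 * a0 * a3 + 8 * a0 * a3 * a4 + 3 * a0 * a3 * a4 ^ 2 + (-1) * a0 * a3 ^ 2 + (-4) * a0 * a2 + (-2) * a0 * a2 * a4 + 2 * a0 * a1 : ZMod 5) = 0 ∧ (12 + (-12) * a2 + 15 * a2 * a4 + 56 * a2 * a4 ^ 2 + 27 * a2 * a4 ^ 3 + 4 * a2 * a4 ^ 4 + a2 * a4 ^ 5 + (-56) * a2 * a3 + (-54) * a2 * a3 * a4 + (-12) * a2 * a3 * a4 ^ 2 + (-4) * a2 * a3 * a4 ^ 3 + 4 * a2 * a3 ^ 2 + 3 * a2 * a3 ^ 2 * a4 + 27 * a2 ^ 2 + 8 * a2 ^ 2 * a4 + 3 * a2 ^ 2 * a4 ^ 2 + (-2)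 * a2 ^ 2 * a3 + (-15) * a1 + (-56) * a1 * a4 + (-27) * a1 * a4 ^ 2 + (-4) * a1 * a4 ^ 3 + (-1) * a1 * a4 ^ 4 + 27 * a1 * a3 + 8 * a1 * a3 * a4 + 3 * a1 * a3 * a4 ^ 2 + (-1) * a1 * a3 ^ 2 + (-8) * a1 * a2 + (-4) * a1 * a2 * a4 + a1 ^ 2 + 56 * a0 + 27 * a0 * a4 + 4 * a0 * a4 ^ 2 + a0 * a4 ^ 3 + (-4) * a0 * a3 + (-2) * a0 * a3 * a4 + 2 * a0 * a2 : ZMod 5) = 0 ∧ (64 + (-12) * a3 + 15 * a3 * a4 + 56 * a3 * a4 ^ 2 + 27 * a3 * a4 ^ 3 + 4 * a3 * a4 ^ 4 + a3 * a4 ^ 5 + (-56) * a3 ^ 2 + (-54) * a3 ^ 2 * a4 + (-12) * a3 ^ 2 * a4 ^ 2 + (-4) * a3 ^ 2 * a4 ^ 3 + 4 * a3 ^ 3 + 3 * a3 ^ 3 * a4 + (-15) * a2 + (-56) * a2 * a4 + (-27) * a2 * a4 ^ 2 + (-4) * a2 * a4 ^ 3 + (-1) * a2 * a4 ^ 4 +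 54 * a2 * a3 + 16 * a2 * a3 * a4 + 6 * a2 * a3 * a4 ^ 2 + (-3) * a2 * a3 ^ 2 + (-4) * a2 ^ 2 + (-2) * a2 ^ 2 * a4 + 56 * a1 + 27 * a1 * a4 + 4 * a1 * a4 ^ 2 + a1 * a4 ^ 3 + (-8) * a1 * a3 + (-4) * a1 * a3 * a4 + 2 * a1 * a2 + (-27) * a0 + (-4) * a0 * a4 + (-1) * a0 * a4 ^ 2 + 2 * a0 * a3 : ZMod 5) = 0 ∧ ((-55) + (-12) * a4 + 15 * a4 ^ 2 + 56 * a4 ^ 3 + 27 * a4 ^ 4 + 4 * a4 ^ 5 + a4 ^ 6 + (-15) * a3 + (-112) * a3 * a4 + (-81) * a3 * a4 ^ 2 + (-16) * a3 * a4 ^ 3 + (-5) * a3 * a4 ^ 4 + 27 * a3 ^ 2 + 12 * a3 ^ 2 * a4 + 6 * a3 ^ 2 * a4 ^ 2 + (-1) * a3 ^ 3 + 56 * a2 + 54 * a2 * a4 + 12 * a2 * a4 ^ 2 + 4 * a2 * a4 ^ 3 + (-8) * a2 * a3 + (-6) * a2 * a3 * a4 + a2 ^ 2 + (-27) * a1 +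 (-8) * a1 * a4 + (-3) * a1 * a4 ^ 2 + 2 * a1 * a3 + 4 * a0 + 2 * a0 * a4 : ZMod 5) = 0) := by decide

lemma nodiv5 (a0 a1 a2 a3 a4 : ZMod 5) :
    ¬ ((Polynomial.X ^ 5 + Polynomial.C a4 * Polynomial.X ^ 4 + Polynomial.C a3 * Polynomial.X ^ 3 + Polynomial.C a2 * Polynomial.X ^ 2 + Polynomial.C a1 * Polynomial.X + Polynomial.C a0 : Polynomial (ZMod 5)) ∣ (Polynomial.X ^ 10 - 4 * Polynomial.X ^ 9 + 27 * Polynomial.X ^ 8 - 56 * Polynomial.X ^ 7 + 15 * Polynomial.X ^ 6 + 12 * Polynomial.X ^ 5 - 55 * Polynomial.X ^ 4 + 64 * Polynomial.X ^ 3 + 12 * Polynomial.X ^ 2 + 32 : Polynomial (ZMod 5))) := by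
  intro hdvd
  rw [cert5 a0 a1 a2 a3 a4] at hdvd
  have hrem := (dvd_add_right (dvd_mul_right _ _)).mp hdvd
  have hz := Polynomial.eq_zero_of_dvd_of_degree_lt hrem (by
    have hdg : (Polynomial.X ^ 5 + Polynomial.C a4 * Polynomial.X ^ 4 + Polynomial.C a3 * Polynomial.X ^ 3 + Polynomial.C a2 * Polynomial.X ^ 2 + Polynomial.C a1 * Polynomial.X + Polynomial.C a0 : Polynomial (ZMod 5)).degree = 5 := by compute_degree!
    rw [hdg]
    exact lt_of_le_of_lt (by compute_degree) (by norm_num))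
  exact dec5 a0 a1 a2 a3 a4 (coeffs5 _ _ _ _ _ hz)

lemma Rz_map5 : Rz.map (Int.castRingHom (ZMod 5)) = (Polynomial.X ^ 10 - 4 * Polynomial.X ^ 9 + 27 * Polynomial.X ^ 8 - 56 * Polynomial.X ^ 7 + 15 * Polynomial.X ^ 6 + 12 * Polynomial.X ^ 5 - 55 * Polynomial.X ^ 4 + 64 * Polynomial.X ^ 3 + 12 * Polynomial.X ^ 2 + 32 : Polynomial (ZMod 5)) := by
  unfold Rz
  simp [Polynomial.map_add, Polynomial.map_sub, Polynomial.map_mul, Polynomial.map_pow, Polynomial.map_ofNat]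

lemma Rz_map13 : Rz.map (Int.castRingHom (ZMod 13)) = (Polynomial.X ^ 10 - 4 * Polynomial.X ^ 9 + 27 * Polynomial.X ^ 8 - 56 * Polynomial.X ^ 7 + 15 * Polynomial.X ^ 6 + 12 * Polynomial.X ^ 5 - 55 * Polynomial.X ^ 4 + 64 * Polynomial.X ^ 3 + 12 * Polynomial.X ^ 2 + 32 : Polynomial (ZMod 13)) := by
  unfold Rz
  simp [Polynomial.map_add, Polynomial.map_sub, Polynomial.map_mul, Polynomial.map_pow, Polynomial.map_ofNat]

lemma no_small_factor (g : Polynomial ℤ) (hm : g.Monic) (h1 : 1 ≤ g.natDegree)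
    (h5 : g.natDegree ≤ 5) : ¬ g ∣ Rz := by
  intro hdvd
  have hd5 : (g.map (Int.castRingHom (ZMod 5))) ∣ (Polynomial.X ^ 10 - 4 * Polynomial.X ^ 9 + 27 * Polynomial.X ^ 8 - 56 * Polynomial.X ^ 7 + 15 * Polynomial.X ^ 6 + 12 * Polynomial.X ^ 5 - 55 * Polynomial.X ^ 4 + 64 * Polynomial.X ^ 3 + 12 * Polynomial.X ^ 2 + 32 : Polynomial (ZMod 5)) := by
    rw [← Rz_map5]; exact Polynomial.map_dvd _ hdvd
  have hd13 : (g.map (Int.castRingHom (ZMod 13))) ∣ (Polynomial.X ^ 10 - 4 * Polynomial.X ^ 9 + 27 * Polynomial.X ^ 8 - 56 * Polynomial.X ^ 7 + 15 * Polynomial.X ^ 6 + 12 * Polynomial.X ^ 5 - 55 * Polynomial.X ^ 4 + 64 * Polynomial.X ^ 3 + 12 * Polynomial.X ^ 2 + 32 : Polynomial (ZMod 13)) := by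
    rw [← Rz_map13]; exact Polynomial.map_dvd _ hdvd
  interval_cases hdeg : g.natDegree
  · exact nodiv1 _ (by rw [← expand1 _ (hm.map _) (by rw [hm.natDegree_map (Int.castRingHom (ZMod 5))]; exact hdeg)]; exact hd5)
  · exact nodiv2 _ _ (by rw [← expand2 _ (hm.map _) (by rw [hm.natDegree_map (Int.castRingHom (ZMod 13))]; exact hdeg)]; exact hd13)
  · exact nodiv3 _ _ _ (by rw [← expand3 _ (hm.map _) (by rw [hm.natDegree_map (Int.castRingHom (ZMod 5))]; exact hdeg)]; exact hd5)
  · exact nodiv4 _ _ _ _ (by rw [← expand4 _ (hm.map _) (by rw [hm.natDegree_map (Int.castRingHom (ZMod 5))]; exact hdeg)]; exact hd5)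
  · exact nodiv5 _ _ _ _ _ (by rw [← expand5 _ (hm.map _) (by rw [hm.natDegree_map (Int.castRingHom (ZMod 5))]; exact hdeg)]; exact hd5)

lemma Rz_irreducible : Irreducible Rz := by
  constructor
  · intro hu
    have := Polynomial.natDegree_eq_zero_of_isUnit hu
    rw [Rz_natDegree] at this; exact absurd this (by norm_num)
  · intro a b hab
    have hRz0 : Rz ≠ 0 := Rz_monic.ne_zero
    have ha0 : a ≠ 0 := fun h => hRz0 (by rw [hab, h, zero_mul])
    have hb0 : b ≠ 0 := fun h => hRz0 (by rw [hab, h, mul_zero])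
    have hdeg : a.natDegree + b.natDegree = 10 := by
      rw [← Polynomial.natDegree_mul ha0 hb0, ← hab, Rz_natDegree]
    have hlc : a.leadingCoeff * b.leadingCoeff = 1 := by
      rw [← Polynomial.leadingCoeff_mul, ← hab]; exact Rz_monic
    have key : ∀ c : Polynomial ℤ, c ∣ Rz → IsUnit c.leadingCoeff → 1 ≤ c.natDegree →
        c.natDegree ≤ 5 → False := by
      intro c hc hcu hc1 hc5
      rcases Int.isUnit_iff.mp hcu with h | h
      · exact no_small_factor c h hc1 hc5 hc
      · refine no_small_factor (-c) ?_ ?_ ?_ ((neg_dvd).mpr hc)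
        · unfold Polynomial.Monic
          rw [Polynomial.leadingCoeff_neg, h]; ring
        · rwa [Polynomial.natDegree_neg]
        · rwa [Polynomial.natDegree_neg]
    have hua : IsUnit a.leadingCoeff := IsUnit.of_mul_eq_one _ hlc
    have hub : IsUnit b.leadingCoeff := IsUnit.of_mul_eq_one _ (by rw [mul_comm]; exact hlc)
    rcases Nat.eq_zero_or_pos a.natDegree with h0 | hpos
    · left
      rw [Polynomial.eq_C_of_natDegree_eq_zero h0]
      refine Polynomial.isUnit_C.mpr ?_
      have : a.coeff 0 = a.leadingCoeff := by
        rw [Polynomial.leadingCoeff, h0]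
      rw [this]; exact hua
    · rcases Nat.lt_or_ge a.natDegree 6 with hle | hgt
      · exact (key a (Dvd.intro b hab.symm) hua hpos (by omega)).elim
      · right
        have hbpos : 1 ≤ b.natDegree ∨ b.natDegree = 0 := by omega
        rcases hbpos with hb1 | hb00
        · exact (key b (Dvd.intro_left a hab.symm) hub hb1 (by omega)).elim
        · rw [Polynomial.eq_C_of_natDegree_eq_zero hb00]
          refine Polynomial.isUnit_C.mpr ?_
          have : b.coeff 0 = b.leadingCoeff := by rw [Polynomial.leadingCoeff, hb00]
          rw [this]; exact hub

noncomputable def Rq : Polynomial ℚ := Rz.map (algebraMap ℤ ℚ)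

lemma Rq_monic : Rq.Monic := Rz_monic.map _

lemma Rq_natDegree : Rq.natDegree = 10 := by
  rw [Rq, Rz_monic.natDegree_map, Rz_natDegree]

lemma Rq_irreducible : Irreducible Rq :=
  (Rz_monic.irreducible_iff_irreducible_map_fraction_map).mp Rz_irreducible

open IntermediateField in
theorem gion_root_degree_ten (t : ℝ)
    (ht : 8 * t ^ 10 + 3 * t ^ 8 + 16 * t ^ 7 - (55 / 4) * t ^ 6 + 3 * t ^ 5 +
      (15 / 4) * t ^ 4 - 14 * t ^ 3 + (27 / 4) * t ^ 2 - t + 1 / 4 = 0) :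
    IsAlgebraic ℚ t ∧ Module.finrank ℚ ℚ⟮t⟯ = 10 := by
  have ht0 : t ≠ 0 := by
    intro h; rw [h] at ht; norm_num at ht
  have hroot : Polynomial.aeval t⁻¹ Rq = 0 := by
    rw [Rq, Polynomial.aeval_map_algebraMap]
    have h4 : (32 : ℝ) * t ^ 10 + 12 * t ^ 8 + 64 * t ^ 7 - 55 * t ^ 6 + 12 * t ^ 5 +
        15 * t ^ 4 - 56 * t ^ 3 + 27 * t ^ 2 - 4 * t + 1 = 0 := by linear_combination 4 * ht
    have key : t⁻¹ ^ 10 - 4 * t⁻¹ ^ 9 + 27 * t⁻¹ ^ 8 - 56 * t⁻¹ ^ 7 + 15 * t⁻¹ ^ 6 +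
        12 * t⁻¹ ^ 5 - 55 * t⁻¹ ^ 4 + 64 * t⁻¹ ^ 3 + 12 * t⁻¹ ^ 2 + 32 = t⁻¹ ^ 10 *
        (32 * t ^ 10 + 12 * t ^ 8 + 64 * t ^ 7 - 55 * t ^ 6 + 12 * t ^ 5 +
         15 * t ^ 4 - 56 * t ^ 3 + 27 * t ^ 2 - 4 * t + 1) := by
      field_simp
      ring
    unfold Rz
    simp only [map_add, map_sub, map_mul, map_pow, map_ofNat, Polynomial.aeval_X]
    linear_combination key + t⁻¹ ^ 10 * h4
  have hint : IsIntegral ℚ t⁻¹ := ⟨Rq, Rq_monic, by rwa [← Polynomial.aeval_def]⟩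
  have hmin : minpoly ℚ t⁻¹ = Rq :=
    (minpoly.eq_of_irreducible_of_monic Rq_irreducible hroot Rq_monic).symm
  have hfin : Module.finrank ℚ ℚ⟮t⁻¹⟯ = 10 := by
    rw [IntermediateField.adjoin.finrank hint, hmin, Rq_natDegree]
  have hset : ℚ⟮t⟯ = ℚ⟮t⁻¹⟯ := by
    apply le_antisymm
    · rw [IntermediateField.adjoin_simple_le_iff]
      have h := ℚ⟮t⁻¹⟯.inv_mem (IntermediateField.mem_adjoin_simple_self ℚ t⁻¹)
      rwa [inv_inv] at h
    · rw [IntermediateField.adjoin_simple_le_iff]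
      exact ℚ⟮t⟯.inv_mem (IntermediateField.mem_adjoin_simple_self ℚ t)
  refine ⟨?_, by rw [hset]; exact hfin⟩
  have halg : IsAlgebraic ℚ t⁻¹ := hint.isAlgebraic
  have h2 := halg.inv
  rwa [inv_inv] at h2
end

section
/- Let q₀ := −3 + (3√5)/2 + (1/2)·√((125 − 41√5)/2) and t₀ := (1 − √5 + √(2(5 − √5)))/2. Let p > 0 and q be real numbers with 2 < q ≤ q₀. Let t be the unique number in (0, t₀] with Q(t) = q, where Q(t) := (−1 + 22t² + 16t³ − 33t⁴ + 16t⁶ + √(1 + 20t² − 26t⁴ + 20t⁶ + t⁸)) / (16t²(1 − t²)). Set a' = 16t(1 − t²), m' = 16t², d' = 16t²(1 − t²), s' = −1 + 6t² − t⁴ + √(1 + 20t² − 26t⁴ + 20t⁶ + t⁸), p' = a' + m' + s' + d', and define a = (p/p')a', m = (p/p')m', s = (p/p')s', d = (p/p')d'. Then a, m, s, d are all positive and satisfy a + m + s + d = p and m/a + d/m + s/d = q. -/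
set_option maxHeartbeats 1000000


theorem gion_solution (q₀ t₀ : ℝ)
    (hq₀ : q₀ = -3 + 3 * Real.sqrt 5 / 2 +
      (1 / 2) * Real.sqrt ((125 - 41 * Real.sqrt 5) / 2))
    (ht₀ : t₀ = (1 - Real.sqrt 5 + Real.sqrt (2 * (5 - Real.sqrt 5))) / 2)
    (p q : ℝ) (hp : 0 < p) (hq1 : 2 < q) (hq2 : q ≤ q₀)
    (t : ℝ) (ht1 : 0 < t) (ht2 : t ≤ t₀)
    (hQt : (-1 + 22 * t ^ 2 + 16 * t ^ 3 - 33 * t ^ 4 + 16 * t ^ 6 +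
        Real.sqrt (1 + 20 * t ^ 2 - 26 * t ^ 4 + 20 * t ^ 6 + t ^ 8)) /
        (16 * t ^ 2 * (1 - t ^ 2)) = q)
    (a' m' d' s' p' a m s d : ℝ)
    (ha' : a' = 16 * t * (1 - t ^ 2)) (hm' : m' = 16 * t ^ 2)
    (hd' : d' = 16 * t ^ 2 * (1 - t ^ 2))
    (hs' : s' = -1 + 6 * t ^ 2 - t ^ 4 +
      Real.sqrt (1 + 20 * t ^ 2 - 26 * t ^ 4 + 20 * t ^ 6 + t ^ 8))
    (hp' : p' = a' + m' + s' + d')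
    (ha : a = p / p' * a') (hm : m = p / p' * m')
    (hs : s = p / p' * s') (hd : d = p / p' * d') :
    0 < a ∧ 0 < m ∧ 0 < s ∧ 0 < d ∧
      a + m + s + d = p ∧ m / a + d / m + s / d = q := by
  set r := Real.sqrt (1 + 20 * t ^ 2 - 26 * t ^ 4 + 20 * t ^ 6 + t ^ 8) with hrdef
  have h5 : Real.sqrt 5 ^ 2 = 5 := Real.sq_sqrt (by norm_num)
  have h5nn : 0 ≤ Real.sqrt 5 := Real.sqrt_nonneg _
  have h5a : (2:ℝ) < Real.sqrt 5 := by nlinarith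
  have h5b : Real.sqrt 5 < 3 := by nlinarith
  have ht0 : t₀ < 1 := by
    rw [ht₀]
    have h1 : Real.sqrt (2 * (5 - Real.sqrt 5)) < 1 + Real.sqrt 5 := by
      have h2 : Real.sqrt (2 * (5 - Real.sqrt 5)) < Real.sqrt ((1 + Real.sqrt 5) ^ 2) := by
        apply Real.sqrt_lt_sqrt
        · nlinarith
        · nlinarith
      rwa [Real.sqrt_sq (by positivity)] at h2
    linarith
  have ht3 : t < 1 := lt_of_le_of_lt ht2 ht0
  have h1t : 0 < 1 - t ^ 2 := by nlinarith
  have hr0 : 0 ≤ r := Real.sqrt_nonneg _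
  have hrsq : r ^ 2 = 1 + 20 * t ^ 2 - 26 * t ^ 4 + 20 * t ^ 6 + t ^ 8 :=
    Real.sq_sqrt (by nlinarith [sq_nonneg (1 - 6 * t ^ 2 + t ^ 4), sq_nonneg (t * (1 - t ^ 2))])
  have hs'pos : 0 < s' := by
    rw [hs']
    nlinarith [mul_pos (mul_pos ht1 ht1) (mul_pos h1t h1t), sq_nonneg (r - (1 - 6 * t ^ 2 + t ^ 4))]
  have ha'pos : 0 < a' := by rw [ha']; nlinarith [mul_pos ht1 h1t]
  have hm'pos : 0 < m' := by rw [hm']; nlinarith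
  have hd'pos : 0 < d' := by rw [hd']; nlinarith [mul_pos (mul_pos ht1 ht1) h1t]
  have hp'pos : 0 < p' := by rw [hp']; linarith
  have hpp : 0 < p / p' := div_pos hp hp'pos
  have hne : p / p' ≠ 0 := ne_of_gt hpp
  refine ⟨by rw [ha]; exact mul_pos hpp ha'pos, by rw [hm]; exact mul_pos hpp hm'pos,
    by rw [hs]; exact mul_pos hpp hs'pos, by rw [hd]; exact mul_pos hpp hd'pos, ?_, ?_⟩
  · rw [ha, hm, hs, hd, ← mul_add, ← mul_add, ← mul_add, ← hp',
      div_mul_cancel₀ _ (ne_of_gt hp'pos)]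
  · rw [ha, hm, hs, hd, mul_div_mul_left _ _ hne, mul_div_mul_left _ _ hne,
      mul_div_mul_left _ _ hne, ← hQt, ha', hm', hd', hs']
    have hta : (16:ℝ) * t * (1 - t ^ 2) ≠ 0 := ne_of_gt (by nlinarith [mul_pos ht1 h1t])
    have htm : (16:ℝ) * t ^ 2 ≠ 0 := by positivity
    have htd : (16:ℝ) * t ^ 2 * (1 - t ^ 2) ≠ 0 := ne_of_gt (by nlinarith [mul_pos (mul_pos ht1 ht1) h1t])
    field_simp
    ring
end
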